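/- arXiv:math/0503061 — 9 statements merged into one kernel-verified Lean document; each statement's English description precedes it below -/
import Mathlib

section
/- Let p be a prime, r ≥ 1 and m ≥ 0 integers, N = r + m, and let a be a nonzero integer divisible by p. Let M be the 4×4 integer matrix with rows (0,a,0,0), (−a,0,0,0), (0,0,0,1), (0,0,−1,0). Then the number of row vectors g ∈ (ℤ/p^Nℤ)^4 satisfying gM ≡ 0 (mod p^N) and g ≡ 0 (mod p^m) equals p^{2·min{r, v_p(a)}}; equivalently, this solution set is a subgroup of index p^{4N − 2·min{r, v_p(a)}} in (ℤ/p^Nℤ)^4. (This computes the weight of a lattice lifting a point on the Pfaffian quadric of F_{2,4}: w'(Λ') = Σ_{i∈I}(4+i)r_i − 2·min{r_1, v_p(a_{11})}.) -/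
/-- `x` is the image in `ZMod q` of an integer divisible by `p^e`. -/
def DivByPow (q p e : ℕ) (x : ZMod q) : Prop := ∃ z : ZMod q, x = (p : ZMod q) ^ e * z

lemma count_one (p : ℕ) (hp : p.Prime) (r m : ℕ) (a : ℤ) (ha : a ≠ 0) :
    Nat.card {x : ZMod (p ^ (r + m)) // (a : ZMod (p ^ (r + m))) * x = 0 ∧
      DivByPow (p ^ (r + m)) p m x} = p ^ (min r (padicValInt p a)) := by
  haveI : Fact p.Prime := ⟨hp⟩
  set N := r + m with hN
  set t := padicValInt p a with ht
  set k := min r t with hk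
  haveI : NeZero (p ^ N) := ⟨pow_ne_zero _ hp.pos.ne'⟩
  haveI : NeZero (p ^ k) := ⟨pow_ne_zero _ hp.pos.ne'⟩
  have hkr : k ≤ r := min_le_left _ _
  have hkt : k ≤ t := min_le_right _ _
  have hkN : k ≤ N := hkr.trans (Nat.le_add_right _ _)
  have hsplit : ((p ^ N : ℕ) : ℤ) = (p:ℤ)^k * (p:ℤ)^(N-k) := by
    push_cast; rw [← pow_add]; congr 1; omega
  have hsplit2 : ((p ^ N : ℕ) : ℤ) = (p:ℤ)^(N-k) * (p:ℤ)^k := by rw [hsplit]; ring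
  set f : ZMod (p ^ k) → {x : ZMod (p ^ N) // (a : ZMod (p ^ N)) * x = 0 ∧
      DivByPow (p ^ N) p m x} := fun z => ⟨((p ^ (N - k) * z.val : ℕ) : ZMod (p ^ N)), by
    constructor
    · obtain ⟨b, hb⟩ : (p : ℤ) ^ k ∣ a := dvd_trans (pow_dvd_pow _ hkt) (padicValInt_dvd a)
      have key : (a * (p ^ (N - k) * z.val) : ℤ) = ((p^N : ℕ) : ℤ) * (b * z.val) := by
        rw [hb, hsplit]; ring
      have h0 : ((a * (p ^ (N - k) * z.val) : ℤ) : ZMod (p^N)) = 0 := by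
        rw [key, Int.cast_mul, Int.cast_natCast, ZMod.natCast_self, zero_mul]
      rw [← h0]; push_cast; ring
    · refine ⟨((p ^ (N - k - m) * z.val : ℕ) : ZMod (p ^ N)), ?_⟩
      push_cast
      rw [← mul_assoc, ← pow_add, show m + (N - k - m) = N - k from by omega]⟩ with hf
  have hinj : Function.Injective f := by
    intro z₁ z₂ hz
    have h1 : ((p ^ (N - k) * (z₁.val:ℤ) - p ^ (N - k) * (z₂.val:ℤ) : ℤ) : ZMod (p ^ N)) = 0 := by
      have := congrArg Subtype.val hz
      simp only [hf] at this
      push_cast at this ⊢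
      rw [this]; ring
    rw [ZMod.intCast_zmod_eq_zero_iff_dvd, hsplit2] at h1
    have h2 : (p:ℤ)^k ∣ ((z₁.val:ℤ) - (z₂.val:ℤ)) := by
      rw [show (p ^ (N - k) * (z₁.val:ℤ) - p ^ (N - k) * (z₂.val:ℤ)) = (p:ℤ)^(N-k) * ((z₁.val:ℤ) - (z₂.val:ℤ)) from by ring] at h1
      exact (mul_dvd_mul_iff_left (pow_ne_zero _ (by exact_mod_cast hp.pos.ne' : (p:ℤ) ≠ 0))).mp h1
    have h3 : ((z₁.val:ℤ) - (z₂.val:ℤ)) = 0 := by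
      refine Int.eq_zero_of_dvd_of_natAbs_lt_natAbs h2 ?_
      have l1 := ZMod.val_lt z₁
      have l2 := ZMod.val_lt z₂
      simp only [Int.natAbs_pow, Int.natAbs_natCast]
      omega
    exact ZMod.val_injective _ (by omega)
  have hsurj : Function.Surjective f := by
    rintro ⟨x, hx0, z, hz⟩
    have hxv : ((x.val : ℤ) : ZMod (p ^ N)) = x := by
      push_cast [ZMod.natCast_val, ZMod.cast_id]
      rfl
    set X : ℤ := (x.val : ℤ) with hX
    by_cases hX0 : X = 0
    · refine ⟨0, Subtype.ext ?_⟩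
      have hx : x = 0 := by rw [← hxv, hX0]; simp
      simp [hf, hx, ZMod.val_zero]
    · have hX1 : ((p ^ N : ℕ) : ℤ) ∣ a * X := by
        rw [← ZMod.intCast_zmod_eq_zero_iff_dvd]
        push_cast
        rw [hxv, hx0]
      have hX2 : ((p ^ N : ℕ) : ℤ) ∣ X - (p:ℤ)^m * (z.val : ℤ) := by
        rw [← ZMod.intCast_zmod_eq_zero_iff_dvd]
        push_cast
        rw [hxv, ZMod.natCast_val, ZMod.cast_id, hz]; ring
      have hmX : (p:ℤ)^m ∣ X := by
        have h1 : (p:ℤ)^m ∣ ((p ^ N : ℕ) : ℤ) := by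
          push_cast; exact pow_dvd_pow _ (Nat.le_add_left m r)
        have := (h1.trans hX2)
        have h2 : (p:ℤ)^m ∣ (p:ℤ)^m * (z.val : ℤ) := Dvd.intro _ rfl
        simpa using dvd_add this h2
      set vX := padicValInt p X with hvX
      have hv1 : N ≤ t + vX := by
        have haX : a * X ≠ 0 := mul_ne_zero ha hX0
        have := (padicValInt_dvd_iff (p := p) N (a * X)).mp (by push_cast at hX1 ⊢; exact hX1)
        rcases this with h | h
        · exact absurd h haX
        · rwa [padicValInt.mul ha hX0] at h
      have hv2 : m ≤ vX := by
        rcases (padicValInt_dvd_iff (p := p) m X).mp hmX with h | h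
        · exact absurd h hX0
        · exact h
      have hdvd : (p:ℤ)^(N-k) ∣ X := by
        rw [padicValInt_dvd_iff]
        right; omega
      obtain ⟨Y, hY⟩ := hdvd
      set w : ZMod (p ^ k) := ((Y : ℤ) : ZMod (p ^ k)) with hw
      have hwY : ((p ^ k : ℕ) : ℤ) ∣ (w.val : ℤ) - Y := by
        rw [← ZMod.intCast_zmod_eq_zero_iff_dvd]
        push_cast [ZMod.natCast_val, ZMod.cast_id]
        rw [hw]; ring_nf
      refine ⟨w, Subtype.ext ?_⟩
      simp only [hf]
      rw [← hxv]
      have : ((p ^ N : ℕ) : ℤ) ∣ (p:ℤ)^(N-k) * (w.val : ℤ) - X := by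
        rw [hY, hsplit2, show (p:ℤ)^(N-k) * (w.val:ℤ) - (p:ℤ)^(N-k) * Y = (p:ℤ)^(N-k) * ((w.val:ℤ) - Y) from by ring]
        exact mul_dvd_mul_left _ (by exact_mod_cast hwY)
      have heq : (((p:ℤ)^(N-k) * (w.val : ℤ) : ℤ) : ZMod (p^N)) = ((X : ℤ) : ZMod (p^N)) := by
        rw [← sub_eq_zero, ← Int.cast_sub, ZMod.intCast_zmod_eq_zero_iff_dvd]
        exact_mod_cast this
      push_cast at heq ⊢
      exact heq
  rw [← Nat.card_eq_of_bijective f ⟨hinj, hsurj⟩, Nat.card_eq_fintype_card, ZMod.card]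

/-- Counting solutions of the congruence system attached to a lattice lifting a point on the
Pfaffian quadric of `F_{2,4}`: with `N = r + m`, `p | a`, and
`M = !![0,a,0,0; -a,0,0,0; 0,0,0,1; 0,0,-1,0]`, the number of `g ∈ (ℤ/p^Nℤ)^4` with
`gM ≡ 0 (mod p^N)` and `g ≡ 0 (mod p^m)` is `p^{2·min(r, v_p(a))}`. -/
theorem weight_point_on_pfaffian (p : ℕ) (hp : p.Prime) (r m : ℕ) (hr : 1 ≤ r)
    (a : ℤ) (ha : a ≠ 0) (hpa : (p : ℤ) ∣ a) :
    Nat.card {g : Fin 4 → ZMod (p ^ (r + m)) //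
      Matrix.vecMul g ((!![0, a, 0, 0; -a, 0, 0, 0; 0, 0, 0, 1; 0, 0, -1, 0] :
          Matrix (Fin 4) (Fin 4) ℤ).map (Int.cast : ℤ → ZMod (p ^ (r + m)))) = 0 ∧
      ∀ i : Fin 4, DivByPow (p ^ (r + m)) p m (g i)} =
    p ^ (2 * min r (padicValInt p a)) := by
  set q := p ^ (r + m) with hq
  set Q : ZMod q → Prop := fun x => (a : ZMod q) * x = 0 ∧ DivByPow q p m x with hQ
  have hzero : Q 0 := ⟨by ring, ⟨0, by ring⟩⟩
  have hvec : ∀ g : Fin 4 → ZMod q,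
      Matrix.vecMul g ((!![0, a, 0, 0; -a, 0, 0, 0; 0, 0, 0, 1; 0, 0, -1, 0] :
          Matrix (Fin 4) (Fin 4) ℤ).map (Int.cast : ℤ → ZMod q)) = 0 ↔
      ((a : ZMod q) * g 0 = 0 ∧ (a : ZMod q) * g 1 = 0 ∧ g 2 = 0 ∧ g 3 = 0) := by
    intro g
    rw [funext_iff, Fin.forall_fin_succ, Fin.forall_fin_succ, Fin.forall_fin_succ,
      Fin.forall_fin_one]
    simp [Matrix.vecMul, dotProduct, Fin.sum_univ_four, Matrix.cons_val_succ,
      Matrix.vecHead, Matrix.vecTail, mul_comm]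
    constructor
    · rintro ⟨h0,h1,h2,h3⟩
      exact ⟨h1, by rw [← neg_eq_zero]; simpa using h0, h3, by rw [← neg_eq_zero]; simpa using h2⟩
    · rintro ⟨h0,h1,h2,h3⟩
      exact ⟨by simpa using h1, h0, by simpa using h3, h2⟩
  have hiff : ∀ g : Fin 4 → ZMod q,
      (Matrix.vecMul g ((!![0, a, 0, 0; -a, 0, 0, 0; 0, 0, 0, 1; 0, 0, -1, 0] :
          Matrix (Fin 4) (Fin 4) ℤ).map (Int.cast : ℤ → ZMod q)) = 0 ∧
        ∀ i : Fin 4, DivByPow q p m (g i)) ↔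
      (Q (g 0) ∧ Q (g 1) ∧ g 2 = 0 ∧ g 3 = 0) := by
    intro g
    rw [hvec g]
    constructor
    · rintro ⟨⟨h0, h1, h2, h3⟩, hdiv⟩
      exact ⟨⟨h0, hdiv 0⟩, ⟨h1, hdiv 1⟩, h2, h3⟩
    · rintro ⟨⟨h0, hd0⟩, ⟨h1, hd1⟩, h2, h3⟩
      refine ⟨⟨h0, h1, h2, h3⟩, ?_⟩
      intro i
      fin_cases i
      · exact hd0
      · exact hd1
      · show DivByPow q p m (g 2)
        rw [h2]; exact hzero.2
      · show DivByPow q p m (g 3)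
        rw [h3]; exact hzero.2
  have e1 := Equiv.subtypeEquivRight hiff
  have e2 : {g : Fin 4 → ZMod q // Q (g 0) ∧ Q (g 1) ∧ g 2 = 0 ∧ g 3 = 0} ≃
      {x : ZMod q // Q x} × {x : ZMod q // Q x} :=
    { toFun := fun g => (⟨g.1 0, g.2.1⟩, ⟨g.1 1, g.2.2.1⟩)
      invFun := fun s => ⟨![s.1.1, s.2.1, 0, 0], by
        refine ⟨by simpa using s.1.2, by simpa using s.2.2, by simp, by simp⟩⟩
      left_inv := by
        rintro ⟨g, hg⟩
        apply Subtype.ext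
        funext i
        fin_cases i
        · simp
        · simp
        · simpa using hg.2.2.1.symm
        · simpa using hg.2.2.2.symm
      right_inv := by rintro ⟨⟨x, hx⟩, ⟨y, hy⟩⟩; simp }
  rw [Nat.card_congr (e1.trans e2), Nat.card_prod, hQ]
  rw [count_one p hp r m a ha, ← pow_add, two_mul]
end

section
/- Let p be a prime, r ≥ 1 an integer, and a_{15}, a_{25}, a_{24} nonzero integers divisible by p. Let M_1 be the 4×4 integer matrix with rows (0,a_{15},0,0), (0,0,0,0), (0,0,0,1), (0,0,−1,0), and M_2 the matrix with rows (0,a_{25},a_{24},0), (0,0,0,1), (0,0,0,0), (0,0,0,0). Then the number of row vectors g ∈ (ℤ/p^rℤ)^4 with gM_1 ≡ 0 (mod p^r) and gM_2 ≡ 0 (mod p^r) equals p^{min{r, v_p(a_{15}), v_p(a_{25}), v_p(a_{24})}}. (This computes the weight of a lattice lifting a line on the Pfaffian quadric of F_{2,4}: w'(Λ') = 6r_2 − min{r_2, v_p(a_{15}), v_p(a_{25}), v_p(a_{24})}.) -/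
private lemma cond_iff_aux (p r : ℕ) [NeZero (p^r)] (a15 a25 a24 : ℤ) (g : Fin 4 → ZMod (p^r)) :
    (Matrix.vecMul g ((!![0, a15, 0, 0; 0, 0, 0, 0; 0, 0, 0, 1; 0, 0, -1, 0] :
          Matrix (Fin 4) (Fin 4) ℤ).map (Int.cast : ℤ → ZMod (p ^ r))) = 0 ∧
      Matrix.vecMul g ((!![0, a25, a24, 0; 0, 0, 0, 1; 0, 0, 0, 0; 0, 0, 0, 0] :
          Matrix (Fin 4) (Fin 4) ℤ).map (Int.cast : ℤ → ZMod (p ^ r))) = 0) ↔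
    ((a15 : ZMod (p^r)) * g 0 = 0 ∧ (a25 : ZMod (p^r)) * g 0 = 0 ∧ (a24 : ZMod (p^r)) * g 0 = 0
      ∧ g 1 = 0 ∧ g 2 = 0 ∧ g 3 = 0) := by
  simp only [Matrix.vecMul, dotProduct, Fin.sum_univ_four, funext_iff,
    Fin.forall_fin_succ, Matrix.map_apply, Matrix.vecHead, Matrix.vecTail]
  simp [Matrix.vecHead, Matrix.vecTail, mul_comm]
  tauto

private lemma key_dvd_aux (p : ℕ) [hp : Fact p.Prime] (r : ℕ) (a : ℤ) (ha : a ≠ 0) (x : ℕ) :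
    (p:ℤ)^r ∣ a * x ↔ (p:ℕ)^(r - min r (padicValInt p a)) ∣ x := by
  rcases eq_or_ne x 0 with rfl | hx
  · simp
  · have hx' : (x:ℤ) ≠ 0 := Int.natCast_ne_zero.mpr hx
    rw [padicValInt_dvd_iff, padicValNat_dvd_iff]
    have h1 : padicValInt p (a * x) = padicValInt p a + padicValNat p x := by
      rw [padicValInt.mul ha hx', padicValInt.of_nat]
    simp only [mul_ne_zero ha hx', hx, h1, false_or, or_false]
    omega

private lemma count_dvd_aux (n d : ℕ) (hn : n ≠ 0) (hd : d ∣ n) (hd0 : d ≠ 0) :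
    Nat.card {x : ZMod n // d ∣ x.val} = n / d := by
  haveI : NeZero n := ⟨hn⟩
  have hlt : ∀ k : Fin (n / d), d * (k : ℕ) < n := by
    intro k
    have h1 : d * (k : ℕ) < d * (n / d) :=
      (Nat.mul_lt_mul_left (Nat.pos_of_ne_zero hd0)).mpr k.2
    rwa [Nat.mul_div_cancel' hd] at h1
  have e : {x : ZMod n // d ∣ x.val} ≃ Fin (n / d) :=
    { toFun := fun x => ⟨x.1.val / d, Nat.div_lt_div_of_lt_of_dvd hd (ZMod.val_lt x.1)⟩
      invFun := fun k => ⟨((d * k : ℕ) : ZMod n), by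
        rw [ZMod.val_natCast_of_lt (hlt k)]; exact Dvd.intro _ rfl⟩
      left_inv := fun x => by
        obtain ⟨x, hx⟩ := x
        ext
        simp only
        rw [Nat.mul_div_cancel' hx, ZMod.natCast_val, ZMod.cast_id]
      right_inv := fun k => by
        ext
        simp only
        rw [ZMod.val_natCast_of_lt (hlt k),
          Nat.mul_div_cancel_left _ (Nat.pos_of_ne_zero hd0)] }
  rw [Nat.card_congr e, Nat.card_eq_fintype_card, Fintype.card_fin]

private lemma mulzero_iff_aux (p : ℕ) [hp : Fact p.Prime] (r : ℕ) (a : ℤ) (ha : a ≠ 0)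
    (x : ZMod (p^r)) :
    (a : ZMod (p^r)) * x = 0 ↔ (p:ℕ)^(r - min r (padicValInt p a)) ∣ x.val := by
  haveI : NeZero (p^r) := ⟨pow_ne_zero r hp.out.pos.ne'⟩
  have hx : ((x.val : ℕ) : ZMod (p^r)) = x := ZMod.natCast_rightInverse x
  rw [← key_dvd_aux p r a ha x.val]
  constructor
  · intro h
    have h2 : ((a * x.val : ℤ) : ZMod (p^r)) = 0 := by push_cast [hx]; exact h
    rw [ZMod.intCast_zmod_eq_zero_iff_dvd] at h2
    simpa using h2
  · intro h
    have h2 : ((a * x.val : ℤ) : ZMod (p^r)) = 0 := by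
      rw [ZMod.intCast_zmod_eq_zero_iff_dvd]
      simpa using h
    push_cast [hx] at h2
    exact h2

/-- Counting solutions of the congruence system attached to a lattice lifting a line on the
Pfaffian quadric of `F_{2,4}`: the number of `g ∈ (ℤ/p^rℤ)^4` with `gM₁ ≡ 0 (mod p^r)` and
`gM₂ ≡ 0 (mod p^r)` equals `p^{min(r, v_p(a₁₅), v_p(a₂₅), v_p(a₂₄))}`. -/
theorem weight_line_on_pfaffian (p : ℕ) (hp : p.Prime) (r : ℕ) (hr : 1 ≤ r)
    (a15 a25 a24 : ℤ) (h15 : a15 ≠ 0) (h25 : a25 ≠ 0) (h24 : a24 ≠ 0)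
    (hp15 : (p : ℤ) ∣ a15) (hp25 : (p : ℤ) ∣ a25) (hp24 : (p : ℤ) ∣ a24) :
    Nat.card {g : Fin 4 → ZMod (p ^ r) //
      Matrix.vecMul g ((!![0, a15, 0, 0; 0, 0, 0, 0; 0, 0, 0, 1; 0, 0, -1, 0] :
          Matrix (Fin 4) (Fin 4) ℤ).map (Int.cast : ℤ → ZMod (p ^ r))) = 0 ∧
      Matrix.vecMul g ((!![0, a25, a24, 0; 0, 0, 0, 1; 0, 0, 0, 0; 0, 0, 0, 0] :
          Matrix (Fin 4) (Fin 4) ℤ).map (Int.cast : ℤ → ZMod (p ^ r))) = 0} =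
    p ^ (min r (min (padicValInt p a15) (min (padicValInt p a25) (padicValInt p a24)))) := by
  haveI : Fact p.Prime := ⟨hp⟩
  haveI : NeZero (p^r) := ⟨pow_ne_zero r hp.pos.ne'⟩
  set v15 := padicValInt p a15
  set v25 := padicValInt p a25
  set v24 := padicValInt p a24
  set m := min r (min v15 (min v25 v24)) with hm
  have hm_le : m ≤ r := min_le_left _ _
  -- the combined divisibility condition
  have hcomb : ∀ t : ℕ,
      ((p:ℕ)^(r - min r v15) ∣ t ∧ (p:ℕ)^(r - min r v25) ∣ t ∧ (p:ℕ)^(r - min r v24) ∣ t) ↔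
      (p:ℕ)^(r - m) ∣ t := by
    intro t
    constructor
    · rintro ⟨h1, h2, h3⟩
      have : r - m = r - min r v15 ∨ r - m = r - min r v25 ∨ r - m = r - min r v24 := by omega
      rcases this with h | h | h <;> rw [h] <;> assumption
    · intro h
      exact ⟨(pow_dvd_pow p (by omega)).trans h, (pow_dvd_pow p (by omega)).trans h,
        (pow_dvd_pow p (by omega)).trans h⟩
  have e : {g : Fin 4 → ZMod (p ^ r) //
      Matrix.vecMul g ((!![0, a15, 0, 0; 0, 0, 0, 0; 0, 0, 0, 1; 0, 0, -1, 0] :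
          Matrix (Fin 4) (Fin 4) ℤ).map (Int.cast : ℤ → ZMod (p ^ r))) = 0 ∧
      Matrix.vecMul g ((!![0, a25, a24, 0; 0, 0, 0, 1; 0, 0, 0, 0; 0, 0, 0, 0] :
          Matrix (Fin 4) (Fin 4) ℤ).map (Int.cast : ℤ → ZMod (p ^ r))) = 0} ≃
      {x : ZMod (p^r) // (p:ℕ)^(r - m) ∣ x.val} :=
    { toFun := fun g => ⟨g.1 0, by
        obtain ⟨h1, h2, h3, _, _, _⟩ := (cond_iff_aux p r a15 a25 a24 g.1).mp g.2
        exact (hcomb _).mp ⟨(mulzero_iff_aux p r a15 h15 _).mp h1,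
          (mulzero_iff_aux p r a25 h25 _).mp h2, (mulzero_iff_aux p r a24 h24 _).mp h3⟩⟩
      invFun := fun x => ⟨![x.1, 0, 0, 0], by
        apply (cond_iff_aux p r a15 a25 a24 _).mpr
        obtain ⟨hd1, hd2, hd3⟩ := (hcomb _).mpr x.2
        refine ⟨?_, ?_, ?_, rfl, rfl, rfl⟩ <;>
          simp only [Matrix.cons_val_zero] <;>
          [exact (mulzero_iff_aux p r a15 h15 _).mpr hd1;
           exact (mulzero_iff_aux p r a25 h25 _).mpr hd2;
           exact (mulzero_iff_aux p r a24 h24 _).mpr hd3]⟩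
      left_inv := fun g => by
        obtain ⟨_, _, _, hg1, hg2, hg3⟩ := (cond_iff_aux p r a15 a25 a24 g.1).mp g.2
        ext i
        fin_cases i <;> simp [hg1, hg2, hg3]
      right_inv := fun x => by
        ext
        simp }
  rw [Nat.card_congr e, count_dvd_aux (p^r) (p^(r-m))
    (pow_ne_zero r hp.pos.ne') (pow_dvd_pow p (by omega)) (pow_ne_zero _ hp.pos.ne'),
    Nat.pow_div (by omega) hp.pos]
  congr 1
  omega
end

section
/- Let p be a prime, r_1, r_2 ≥ 1 integers, N = r_1 + r_2, and a_{15}, a_{25}, a_{24} nonzero integers divisible by p. Let M_1 be the 4×4 integer matrix with rows (0,a_{15},0,0), (−a_{15},0,0,0), (0,0,0,1), (0,0,−1,0), and M_2 the matrix with rows (0,a_{25},a_{24},0), (0,0,0,1), (0,0,0,0), (0,0,0,0). Then the number of row vectors g ∈ (ℤ/p^Nℤ)^4 with gM_1 ≡ 0 (mod p^N) and gM_2 ≡ 0 (mod p^{r_2}) equals p^{min{r_1, v_p(a_{15})} + min{r_1+r_2, v_p(a_{15}), v_p(a_{25})+r_1, v_p(a_{24})+r_1}}. (This computes the weight of a lattice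 lifting a point–line flag on the Pfaffian quadric of F_{2,4}: w'(Λ') = 6r_2 + 5r_1 − min{r_1, v_p(a_{15})} − min{r_1+r_2, v_p(a_{15}), v_p(a_{25})+r_1, v_p(a_{24})+r_1}.) -/
lemma divByPow_intCast_iff {p : ℕ} (hp : p.Prime) {N e : ℕ} (he : e ≤ N) (m : ℤ) :
    DivByPow (p ^ N) p e ((m : ℤ) : ZMod (p ^ N)) ↔ (p : ℤ) ^ e ∣ m := by
  constructor
  · rintro ⟨z, hz⟩
    obtain ⟨n, rfl⟩ := ZMod.intCast_surjective z
    have hz2 : ((m - (p : ℤ) ^ e * n : ℤ) : ZMod (p ^ N)) = 0 := by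
      push_cast
      rw [hz]; ring
    have h3 : (p : ℤ) ^ N ∣ m - (p : ℤ) ^ e * n := by
      have := (ZMod.intCast_zmod_eq_zero_iff_dvd _ _).mp hz2
      exact_mod_cast this
    have h4 : (p : ℤ) ^ e ∣ m - (p : ℤ) ^ e * n := (pow_dvd_pow _ he).trans h3
    have h5 : (p : ℤ) ^ e ∣ (p : ℤ) ^ e * n := Dvd.intro _ rfl
    simpa using dvd_add h4 h5
  · rintro ⟨t, rfl⟩
    exact ⟨(t : ZMod (p ^ N)), by push_cast; ring⟩

lemma divByPow_val_iff {p : ℕ} (hp : p.Prime) {N e : ℕ} (he : e ≤ N) (x : ZMod (p ^ N)) :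
    DivByPow (p ^ N) p e x ↔ p ^ e ∣ x.val := by
  haveI : NeZero (p ^ N) := ⟨pow_ne_zero _ hp.ne_zero⟩
  have hx : (((x.val : ℕ) : ℤ) : ZMod (p ^ N)) = x := by
    push_cast
    exact ZMod.natCast_rightInverse x
  have h := divByPow_intCast_iff hp he ((x.val : ℕ) : ℤ)
  rw [hx] at h
  rw [h]
  constructor
  · intro hd
    exact_mod_cast hd
  · intro hd
    exact_mod_cast hd

lemma divByPow_and_iff {p : ℕ} (hp : p.Prime) {N a b : ℕ} (ha : a ≤ N) (hb : b ≤ N)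
    (x : ZMod (p ^ N)) :
    (DivByPow (p ^ N) p a x ∧ DivByPow (p ^ N) p b x) ↔ DivByPow (p ^ N) p (max a b) x := by
  rw [divByPow_val_iff hp ha, divByPow_val_iff hp hb, divByPow_val_iff hp (max_le ha hb)]
  constructor
  · rintro ⟨h1, h2⟩
    rcases le_total a b with h | h
    · rwa [max_eq_right h]
    · rwa [max_eq_left h]
  · intro h
    exact ⟨(pow_dvd_pow _ (le_max_left a b)).trans h, (pow_dvd_pow _ (le_max_right a b)).trans h⟩

lemma eq_zero_iff_divByPow {p : ℕ} (hp : p.Prime) {N : ℕ} (x : ZMod (p ^ N)) :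
    x = 0 ↔ DivByPow (p ^ N) p N x := by
  have hpN : ((p : ZMod (p ^ N))) ^ N = 0 := by
    rw [← Nat.cast_pow, ZMod.natCast_self]
  constructor
  · rintro rfl
    exact ⟨0, by rw [mul_zero]⟩
  · rintro ⟨z, rfl⟩
    rw [hpN, zero_mul]

lemma int_pow_dvd_mul_iff {p : ℕ} (hp : p.Prime) {a : ℤ} (ha : a ≠ 0) (e : ℕ) (m : ℤ) :
    (p : ℤ) ^ e ∣ a * m ↔ (p : ℤ) ^ (e - padicValInt p a) ∣ m := by
  haveI : Fact p.Prime := ⟨hp⟩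
  set v := padicValInt p a with hv
  obtain ⟨u, hu⟩ : (p : ℤ) ^ v ∣ a := padicValInt_dvd a
  have hu0 : ¬ (p : ℤ) ∣ u := by
    rintro ⟨w, hw⟩
    have hdvd : (p : ℤ) ^ (v + 1) ∣ a := ⟨w, by rw [hu, hw, pow_succ]; ring⟩
    rcases (padicValInt_dvd_iff (v + 1) a).mp hdvd with h | h
    · exact ha h
    · omega
  by_cases hev : e ≤ v
  · rw [Nat.sub_eq_zero_of_le hev]
    simp only [pow_zero, one_dvd, iff_true]
    exact Dvd.dvd.mul_right ((pow_dvd_pow _ hev).trans ⟨u, hu⟩) m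
  · push_neg at hev
    have he' : e = v + (e - v) := by omega
    have hpv : (p : ℤ) ^ v ≠ 0 := pow_ne_zero _ (by exact_mod_cast hp.ne_zero)
    constructor
    · intro h
      rw [hu, he', pow_add] at h
      obtain ⟨c, hc⟩ := h
      have h2 : (p : ℤ) ^ (e - v) ∣ u * m := by
        refine ⟨c, mul_left_cancel₀ hpv ?_⟩
        calc (p : ℤ) ^ v * (u * m) = (p : ℤ) ^ v * u * m := by ring
        _ = (p : ℤ) ^ v * (p : ℤ) ^ (e - v) * c := hc
        _ = (p : ℤ) ^ v * ((p : ℤ) ^ (e - v) * c) := by ring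
      exact (Nat.prime_iff_prime_int.mp hp).pow_dvd_of_dvd_mul_left _ hu0 h2
    · rintro ⟨c, rfl⟩
      refine ⟨u * c, ?_⟩
      rw [hu, show (p : ℤ) ^ e = (p : ℤ) ^ v * (p : ℤ) ^ (e - v) by
        rw [← pow_add, Nat.add_sub_cancel' hev.le]]
      ring

lemma divByPow_intMul_iff {p : ℕ} (hp : p.Prime) {N e : ℕ} (he : e ≤ N) {a : ℤ} (ha : a ≠ 0)
    (x : ZMod (p ^ N)) :
    DivByPow (p ^ N) p e ((a : ZMod (p ^ N)) * x) ↔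
      DivByPow (p ^ N) p (e - padicValInt p a) x := by
  haveI : NeZero (p ^ N) := ⟨pow_ne_zero _ hp.ne_zero⟩
  obtain ⟨m, rfl⟩ := ZMod.intCast_surjective x
  have h1 : (a : ZMod (p ^ N)) * (m : ZMod (p ^ N)) = ((a * m : ℤ) : ZMod (p ^ N)) := by
    push_cast; ring
  rw [h1, divByPow_intCast_iff hp he, divByPow_intCast_iff hp (le_trans (Nat.sub_le _ _) he),
    int_pow_dvd_mul_iff hp ha]

lemma card_divByPow {p : ℕ} (hp : p.Prime) {N k : ℕ} (hk : k ≤ N) :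
    Nat.card {x : ZMod (p ^ N) // DivByPow (p ^ N) p k x} = p ^ (N - k) := by
  haveI : NeZero (p ^ N) := ⟨pow_ne_zero _ hp.ne_zero⟩
  have hppos : 0 < p ^ k := pow_pos hp.pos k
  have hsplit : p ^ N = p ^ k * p ^ (N - k) := by
    rw [← pow_add]
    congr 1
    omega
  refine Nat.card_eq_of_equiv_fin
    ({ toFun := fun x => ⟨x.1.val / p ^ k, ?_⟩,
       invFun := fun j => ⟨((p ^ k * j.1 : ℕ) : ZMod (p ^ N)),
         ⟨((j.1 : ℕ) : ZMod (p ^ N)), by push_cast; ring⟩⟩,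
       left_inv := ?_, right_inv := ?_ })
  · have h1 : x.1.val < p ^ N := ZMod.val_lt x.1
    have h2 : p ^ k ∣ x.1.val := (divByPow_val_iff hp hk x.1).mp x.2
    rw [Nat.div_lt_iff_lt_mul hppos]
    calc x.1.val < p ^ N := h1
    _ = p ^ (N - k) * p ^ k := by rw [hsplit]; ring
  · intro x
    apply Subtype.ext
    have h2 : p ^ k ∣ x.1.val := (divByPow_val_iff hp hk x.1).mp x.2
    show ((p ^ k * (x.1.val / p ^ k) : ℕ) : ZMod (p ^ N)) = x.1
    rw [Nat.mul_div_cancel' h2]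
    exact ZMod.natCast_rightInverse x.1
  · intro j
    apply Fin.ext
    show (((p ^ k * j.1 : ℕ) : ZMod (p ^ N))).val / p ^ k = j.1
    have hlt : p ^ k * j.1 < p ^ N := by
      calc p ^ k * j.1 < p ^ k * p ^ (N - k) :=
        mul_lt_mul_of_pos_left j.2 hppos
      _ = p ^ N := hsplit.symm
    rw [ZMod.val_natCast_of_lt hlt, Nat.mul_div_cancel_left _ hppos]

lemma vecMul_M1_iff (n : ℕ) (a15 : ℤ) (g : Fin 4 → ZMod n) :
    Matrix.vecMul g ((!![0, a15, 0, 0; -a15, 0, 0, 0; 0, 0, 0, 1; 0, 0, -1, 0] :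
          Matrix (Fin 4) (Fin 4) ℤ).map (Int.cast : ℤ → ZMod n)) = 0 ↔
    ((a15 : ZMod n) * g 0 = 0 ∧ (a15 : ZMod n) * g 1 = 0 ∧ g 2 = 0 ∧ g 3 = 0) := by
  simp [Matrix.vecMul, dotProduct, Fin.sum_univ_four, funext_iff, Fin.forall_fin_succ,
    mul_comm]
  tauto

lemma vecMul_M2_iff (n p r2 : ℕ) (a25 a24 : ℤ) (g : Fin 4 → ZMod n) :
    (∀ j : Fin 4, DivByPow n p r2
        (Matrix.vecMul g ((!![0, a25, a24, 0; 0, 0, 0, 1; 0, 0, 0, 0; 0, 0, 0, 0] :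
          Matrix (Fin 4) (Fin 4) ℤ).map (Int.cast : ℤ → ZMod n)) j)) ↔
    (DivByPow n p r2 ((a25 : ZMod n) * g 0) ∧ DivByPow n p r2 ((a24 : ZMod n) * g 0) ∧
      DivByPow n p r2 (g 1)) := by
  have h0 : DivByPow n p r2 (0 : ZMod n) := ⟨0, by ring⟩
  simp [Matrix.vecMul, dotProduct, Fin.sum_univ_four, Fin.forall_fin_succ, mul_comm, h0,
    Matrix.vecHead, Matrix.vecTail, Function.comp]

set_option maxHeartbeats 2000000 in
/-- Counting solutions of the congruence system attached to a lattice lifting a point–line flag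
on the Pfaffian quadric of `F_{2,4}`: with `N = r₁ + r₂`, the number of `g ∈ (ℤ/p^Nℤ)^4` with
`gM₁ ≡ 0 (mod p^N)` and `gM₂ ≡ 0 (mod p^{r₂})` equals
`p^{min(r₁, v(a₁₅)) + min(r₁+r₂, v(a₁₅), v(a₂₅)+r₁, v(a₂₄)+r₁)}`. -/
theorem weight_point_line_flag_on_pfaffian (p : ℕ) (hp : p.Prime) (r1 r2 : ℕ)
    (hr1 : 1 ≤ r1) (hr2 : 1 ≤ r2)
    (a15 a25 a24 : ℤ) (h15 : a15 ≠ 0) (h25 : a25 ≠ 0) (h24 : a24 ≠ 0)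
    (hp15 : (p : ℤ) ∣ a15) (hp25 : (p : ℤ) ∣ a25) (hp24 : (p : ℤ) ∣ a24) :
    Nat.card {g : Fin 4 → ZMod (p ^ (r1 + r2)) //
      Matrix.vecMul g ((!![0, a15, 0, 0; -a15, 0, 0, 0; 0, 0, 0, 1; 0, 0, -1, 0] :
          Matrix (Fin 4) (Fin 4) ℤ).map (Int.cast : ℤ → ZMod (p ^ (r1 + r2)))) = 0 ∧
      ∀ j : Fin 4, DivByPow (p ^ (r1 + r2)) p r2
        (Matrix.vecMul g ((!![0, a25, a24, 0; 0, 0, 0, 1; 0, 0, 0, 0; 0, 0, 0, 0] :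
          Matrix (Fin 4) (Fin 4) ℤ).map (Int.cast : ℤ → ZMod (p ^ (r1 + r2)))) j)} =
    p ^ (min r1 (padicValInt p a15) +
      min (r1 + r2) (min (padicValInt p a15)
        (min (padicValInt p a25 + r1) (padicValInt p a24 + r1)))) := by
  haveI hfact : Fact p.Prime := ⟨hp⟩
  set N := r1 + r2 with hN
  haveI : NeZero (p ^ N) := ⟨pow_ne_zero _ hp.ne_zero⟩
  set v15 := padicValInt p a15 with hv15
  set v25 := padicValInt p a25 with hv25
  set v24 := padicValInt p a24 with hv24
  set k1 := max (N - v15) (max (r2 - v25) (r2 - v24)) with hk1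
  set k2 := max (N - v15) r2 with hk2
  have hr2N : r2 ≤ N := by omega
  have hk1N : k1 ≤ N := by omega
  have hk2N : k2 ≤ N := by omega
  have hiff : ∀ g : Fin 4 → ZMod (p ^ N),
      (Matrix.vecMul g ((!![0, a15, 0, 0; -a15, 0, 0, 0; 0, 0, 0, 1; 0, 0, -1, 0] :
          Matrix (Fin 4) (Fin 4) ℤ).map (Int.cast : ℤ → ZMod (p ^ N))) = 0 ∧
      ∀ j : Fin 4, DivByPow (p ^ N) p r2
        (Matrix.vecMul g ((!![0, a25, a24, 0; 0, 0, 0, 1; 0, 0, 0, 0; 0, 0, 0, 0] :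
          Matrix (Fin 4) (Fin 4) ℤ).map (Int.cast : ℤ → ZMod (p ^ N))) j)) ↔
      (DivByPow (p ^ N) p k1 (g 0) ∧ DivByPow (p ^ N) p k2 (g 1) ∧ g 2 = 0 ∧ g 3 = 0) := by
    intro g
    rw [vecMul_M1_iff, vecMul_M2_iff]
    rw [eq_zero_iff_divByPow hp ((a15 : ZMod (p ^ N)) * g 0),
        eq_zero_iff_divByPow hp ((a15 : ZMod (p ^ N)) * g 1),
        divByPow_intMul_iff hp le_rfl h15, divByPow_intMul_iff hp le_rfl h15,
        divByPow_intMul_iff hp hr2N h25, divByPow_intMul_iff hp hr2N h24]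
    have c0 : (DivByPow (p ^ N) p (N - v15) (g 0) ∧
        DivByPow (p ^ N) p (r2 - v25) (g 0) ∧ DivByPow (p ^ N) p (r2 - v24) (g 0)) ↔
        DivByPow (p ^ N) p k1 (g 0) := by
      rw [divByPow_and_iff hp (by omega) (by omega),
          divByPow_and_iff hp (by omega) (by omega)]
    have c1 : (DivByPow (p ^ N) p (N - v15) (g 1) ∧ DivByPow (p ^ N) p r2 (g 1)) ↔
        DivByPow (p ^ N) p k2 (g 1) := divByPow_and_iff hp (by omega) hr2N (g 1)
    constructor
    · rintro ⟨⟨hA, hB, h2, h3⟩, hC, hD, hE⟩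
      exact ⟨c0.mp ⟨hA, hC, hD⟩, c1.mp ⟨hB, hE⟩, h2, h3⟩
    · rintro ⟨hx, hy, h2, h3⟩
      obtain ⟨hA, hC, hD⟩ := c0.mpr hx
      obtain ⟨hB, hE⟩ := c1.mpr hy
      exact ⟨⟨hA, hB, h2, h3⟩, hC, hD, hE⟩
  let E : {g : Fin 4 → ZMod (p ^ N) //
      Matrix.vecMul g ((!![0, a15, 0, 0; -a15, 0, 0, 0; 0, 0, 0, 1; 0, 0, -1, 0] :
          Matrix (Fin 4) (Fin 4) ℤ).map (Int.cast : ℤ → ZMod (p ^ N))) = 0 ∧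
      ∀ j : Fin 4, DivByPow (p ^ N) p r2
        (Matrix.vecMul g ((!![0, a25, a24, 0; 0, 0, 0, 1; 0, 0, 0, 0; 0, 0, 0, 0] :
          Matrix (Fin 4) (Fin 4) ℤ).map (Int.cast : ℤ → ZMod (p ^ N))) j)} ≃
      {x : ZMod (p ^ N) // DivByPow (p ^ N) p k1 x} ×
      {y : ZMod (p ^ N) // DivByPow (p ^ N) p k2 y} :=
    { toFun := fun g => (⟨g.1 0, ((hiff g.1).mp g.2).1⟩, ⟨g.1 1, ((hiff g.1).mp g.2).2.1⟩),
      invFun := fun z => ⟨![z.1.1, z.2.1, 0, 0], (hiff _).mpr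
        ⟨by simpa using z.1.2, by simpa using z.2.2, by simp, by simp⟩⟩,
      left_inv := by
        intro g
        apply Subtype.ext
        funext i
        obtain ⟨_, _, h2, h3⟩ := (hiff g.1).mp g.2
        fin_cases i <;> simp [h2, h3],
      right_inv := by
        intro z
        refine Prod.ext ?_ ?_ <;> apply Subtype.ext <;> simp }
  rw [Nat.card_congr E, Nat.card_prod, card_divByPow hp hk1N, card_divByPow hp hk2N, ← pow_add]
  congr 1
  omega
end

section
/- Let p be a prime, r ≥ 1 an integer, and a_{33}, a_{34}, a_{35}, a_{23}, a_{24}, a_{25}, a_{13}, a_{14}, a_{15} integers divisible by p. Let M_1 have rows (0,1,0,0), (−1,0,a_{33},a_{34}), (0,−a_{33},0,a_{35}), (0,−a_{34},−a_{35},0); M_2 have rows (0,0,1,0), (0,0,a_{23},a_{24}), (−1,−a_{23},0,a_{25}), (0,−a_{24},−a_{25},0); and M_3 have rows (0,0,0,1), (0,0,a_{13},a_{14}), (0,−a_{13},0,a_{15}), (−1,−a_{14},−a_{15},0). Then the only row vector g ∈ (ℤ/p^rℤ)^4 satisfying gM_i ≡ 0 (mod p^r) for i = 1,2,3 is g = 0;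 that is, this system of congruences has full rank and the solution count is 1. (Planes in this ruling of the Pfaffian quadric give the same weight 7r_3 as planes not on the quadric.) -/
/-- For planes in the first ruling of the Pfaffian quadric of `F_{2,4}` the congruence system
has full rank: the only `g ∈ (ℤ/p^rℤ)^4` with `gMᵢ ≡ 0 (mod p^r)` for `i = 1,2,3` is `g = 0`,
i.e. the solution count is `1`. -/
theorem weight_plane_first_ruling (p : ℕ) (hp : p.Prime) (r : ℕ) (hr : 1 ≤ r)
    (a33 a34 a35 a23 a24 a25 a13 a14 a15 : ℤ)
    (hp33 : (p : ℤ) ∣ a33) (hp34 : (p : ℤ) ∣ a34) (hp35 : (p : ℤ) ∣ a35)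
    (hp23 : (p : ℤ) ∣ a23) (hp24 : (p : ℤ) ∣ a24) (hp25 : (p : ℤ) ∣ a25)
    (hp13 : (p : ℤ) ∣ a13) (hp14 : (p : ℤ) ∣ a14) (hp15 : (p : ℤ) ∣ a15) :
    (∀ g : Fin 4 → ZMod (p ^ r),
      Matrix.vecMul g ((!![0, 1, 0, 0; -1, 0, a33, a34; 0, -a33, 0, a35; 0, -a34, -a35, 0] :
          Matrix (Fin 4) (Fin 4) ℤ).map (Int.cast : ℤ → ZMod (p ^ r))) = 0 →
      Matrix.vecMul g ((!![0, 0, 1, 0; 0, 0, a23, a24; -1, -a23, 0, a25; 0, -a24, -a25, 0] :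
          Matrix (Fin 4) (Fin 4) ℤ).map (Int.cast : ℤ → ZMod (p ^ r))) = 0 →
      Matrix.vecMul g ((!![0, 0, 0, 1; 0, 0, a13, a14; 0, -a13, 0, a15; -1, -a14, -a15, 0] :
          Matrix (Fin 4) (Fin 4) ℤ).map (Int.cast : ℤ → ZMod (p ^ r))) = 0 →
      g = 0) ∧
    Nat.card {g : Fin 4 → ZMod (p ^ r) //
      Matrix.vecMul g ((!![0, 1, 0, 0; -1, 0, a33, a34; 0, -a33, 0, a35; 0, -a34, -a35, 0] :
          Matrix (Fin 4) (Fin 4) ℤ).map (Int.cast : ℤ → ZMod (p ^ r))) = 0 ∧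
      Matrix.vecMul g ((!![0, 0, 1, 0; 0, 0, a23, a24; -1, -a23, 0, a25; 0, -a24, -a25, 0] :
          Matrix (Fin 4) (Fin 4) ℤ).map (Int.cast : ℤ → ZMod (p ^ r))) = 0 ∧
      Matrix.vecMul g ((!![0, 0, 0, 1; 0, 0, a13, a14; 0, -a13, 0, a15; -1, -a14, -a15, 0] :
          Matrix (Fin 4) (Fin 4) ℤ).map (Int.cast : ℤ → ZMod (p ^ r))) = 0} = 1 := by

  have H : ∀ g : Fin 4 → ZMod (p ^ r),
      Matrix.vecMul g ((!![0, 1, 0, 0; -1, 0, a33, a34; 0, -a33, 0, a35; 0, -a34, -a35, 0] :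
          Matrix (Fin 4) (Fin 4) ℤ).map (Int.cast : ℤ → ZMod (p ^ r))) = 0 →
      Matrix.vecMul g ((!![0, 0, 1, 0; 0, 0, a23, a24; -1, -a23, 0, a25; 0, -a24, -a25, 0] :
          Matrix (Fin 4) (Fin 4) ℤ).map (Int.cast : ℤ → ZMod (p ^ r))) = 0 →
      Matrix.vecMul g ((!![0, 0, 0, 1; 0, 0, a13, a14; 0, -a13, 0, a15; -1, -a14, -a15, 0] :
          Matrix (Fin 4) (Fin 4) ℤ).map (Int.cast : ℤ → ZMod (p ^ r))) = 0 →
      g = 0 := by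
    intro g h1 h2 h3
    have e1 := congrFun h1 0
    have e2 := congrFun h2 0
    have e3 := congrFun h3 0
    have e4 := congrFun h1 1
    simp [Matrix.vecMul, dotProduct, Fin.sum_univ_four, Matrix.map_apply, Matrix.vecHead, Matrix.vecTail, Function.comp] at e1 e2 e3 e4
    funext i
    fin_cases i
    · show g 0 = 0
      have : g 0 - (a33 : ZMod (p ^ r)) * g 2 - (a34 : ZMod (p ^ r)) * g 3 = 0 := by
        rw [← e4]; ring
      rw [e2, e3] at this
      simpa using this
    · simpa using e1
    · simpa using e2
    · simpa using e3
  refine ⟨H, ?_⟩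
  have : Unique {g : Fin 4 → ZMod (p ^ r) //
      Matrix.vecMul g ((!![0, 1, 0, 0; -1, 0, a33, a34; 0, -a33, 0, a35; 0, -a34, -a35, 0] :
          Matrix (Fin 4) (Fin 4) ℤ).map (Int.cast : ℤ → ZMod (p ^ r))) = 0 ∧
      Matrix.vecMul g ((!![0, 0, 1, 0; 0, 0, a23, a24; -1, -a23, 0, a25; 0, -a24, -a25, 0] :
          Matrix (Fin 4) (Fin 4) ℤ).map (Int.cast : ℤ → ZMod (p ^ r))) = 0 ∧
      Matrix.vecMul g ((!![0, 0, 0, 1; 0, 0, a13, a14; 0, -a13, 0, a15; -1, -a14, -a15, 0] :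
          Matrix (Fin 4) (Fin 4) ℤ).map (Int.cast : ℤ → ZMod (p ^ r))) = 0} :=
    { default := ⟨0, by simp [Matrix.vecMul_zero], by simp [Matrix.vecMul_zero],
        by simp [Matrix.vecMul_zero]⟩
      uniq := fun ⟨g, hg1, hg2, hg3⟩ => Subtype.ext (H g hg1 hg2 hg3) }
  exact Nat.card_unique
end

section
/- Let p be a prime, r ≥ 1 an integer, and a_{15}, a_{25}, a_{24}, a_{35}, a_{34}, a_{33} nonzero integers divisible by p. Let M_1 have rows (0,a_{15},0,0), (0,0,0,0), (0,0,0,1), (0,0,−1,0); M_2 have rows (0,a_{25},a_{24},0), (0,0,0,1), (0,0,0,0), (0,0,0,0); and M_3 have rows (0,a_{35},a_{34},a_{33}), (0,0,0,0), (0,0,0,0), (0,0,0,0). Then the number of row vectors g ∈ (ℤ/p^rℤ)^4 with gM_i ≡ 0 (mod p^r) for i = 1,2,3 equals p^{min{r, v_p(a_{15}), v_p(a_{25}), v_p(a_{24}), v_p(a_{35}), v_p(a_{34}), v_p(a_{33})}}. (This computes the weight w'(Λ') = 7r_3 − min{r_3, v_p(a_{15}), v_p(a_{25}), v_p(a_{24}),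 v_p(a_{35}), v_p(a_{34}), v_p(a_{33})} for lattices lifting a plane in the second ruling of the Pfaffian quadric of F_{2,4}.) -/
/-!
The three systems force `g₁ = g₂ = g₃ = 0` and leave only the conditions `aᵢ g₀ = 0` on `g₀`.
In `ℤ/p^r`, a nonzero integer `a = p^v b` with `p ∤ b` acts as `p^v` times a unit, so these
conditions together say `p^m g₀ = 0` with `m = min(r, v_p(aᵢ))`, and the `p^m`-torsion of
`ℤ/p^r` has `p^m` elements.
-/

theorem ZMod.card_mul_eq_zero (n d : ℕ) [NeZero n] :
    Nat.card {x : ZMod n // (d : ZMod n) * x = 0} = n.gcd d := by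
  let f := AddMonoidHom.mulLeft (d : ZMod n)
  have hrange : f.range = AddSubgroup.zmultiples (d : ZMod n) := by
    ext y
    simp only [AddMonoidHom.mem_range, AddMonoidHom.coe_mulLeft, AddSubgroup.mem_zmultiples_iff,
      f]
    constructor
    · rintro ⟨x, rfl⟩
      exact ⟨x.cast, by simp [mul_comm]⟩
    · rintro ⟨k, rfl⟩
      exact ⟨k, by simp [mul_comm]⟩
  have hker := f.ker.card_mul_index
  rw [AddSubgroup.index_ker, hrange, Nat.card_zmultiples, ZMod.addOrderOf_coe _ (NeZero.ne n),
    Nat.card_zmod] at hker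
  have hgcd : 0 < n.gcd d := Nat.gcd_pos_of_pos_left d (NeZero.pos n)
  change Nat.card f.ker = _
  rw [Nat.eq_div_of_mul_eq_left (Nat.div_pos (Nat.gcd_le_left d (NeZero.pos n)) hgcd).ne' hker,
    Nat.div_div_self (Nat.gcd_dvd_left n d) (NeZero.ne n)]

theorem pow_min_mul_eq_zero_iff {M₀ : Type*} [MonoidWithZero M₀] (c x : M₀) (k l : ℕ) :
    c ^ min k l * x = 0 ↔ c ^ k * x = 0 ∧ c ^ l * x = 0 := by
  rcases le_total k l with h | h
  · rw [min_eq_left h]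
    exact ⟨fun hx => ⟨hx, pow_mul_eq_zero_of_le h hx⟩, And.left⟩
  · rw [min_eq_right h]
    exact ⟨fun hx => ⟨pow_mul_eq_zero_of_le h hx, hx⟩, And.right⟩

theorem ZMod.card_pow_mul_eq_zero {p : ℕ} [NeZero p] {m r : ℕ} (hmr : m ≤ r) :
    Nat.card {x : ZMod (p ^ r) // (p : ZMod (p ^ r)) ^ m * x = 0} = p ^ m := by
  have := ZMod.card_mul_eq_zero (p ^ r) (p ^ m)
  rwa [Nat.cast_pow, Nat.gcd_eq_right (pow_dvd_pow p hmr)] at this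

theorem exists_eq_pow_padicValInt_mul {p : ℕ} [Fact p.Prime] {a : ℤ} (ha : a ≠ 0) :
    ∃ b : ℤ, ¬ (p : ℤ) ∣ b ∧ a = p ^ padicValInt p a * b := by
  obtain ⟨b, hb⟩ := padicValInt_dvd (p := p) a
  refine ⟨b, fun ⟨c, hc⟩ => ?_, hb⟩
  have : (p : ℤ) ^ (padicValInt p a + 1) ∣ a := ⟨c, by rw [pow_succ, mul_assoc, ← hc, ← hb]⟩
  rw [padicValInt_dvd_iff] at this
  omega

theorem ZMod.intCast_mul_eq_zero_iff {p : ℕ} [Fact p.Prime] {r : ℕ} {a : ℤ} (ha : a ≠ 0)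
    (x : ZMod (p ^ r)) :
    (a : ZMod (p ^ r)) * x = 0 ↔ (p : ZMod (p ^ r)) ^ padicValInt p a * x = 0 := by
  obtain ⟨b, hpb, hab⟩ := exists_eq_pow_padicValInt_mul (p := p) ha
  have hcop : IsCoprime b ((p ^ r : ℕ) : ℤ) := by
    rw [Nat.cast_pow]
    exact (((Nat.prime_iff_prime_int.mp Fact.out).coprime_iff_not_dvd).mpr hpb).pow_left.symm
  have hb : IsUnit (b : ZMod (p ^ r)) := (ZMod.unitOfIsCoprime b hcop).isUnit
  rw [show (a : ZMod (p ^ r)) * x = b * (p ^ padicValInt p a * x) by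
    conv_lhs => rw [hab]
    push_cast
    ring]
  exact hb.mul_right_eq_zero

theorem Fin.card_subtype_head_tail_eq_zero {α : Type*} [Zero α] {n : ℕ} (P : α → Prop) :
    Nat.card {g : Fin (n + 1) → α // P (g 0) ∧ ∀ i : Fin n, g i.succ = 0} =
      Nat.card {x : α // P x} :=
  Nat.card_congr
    { toFun := fun g => ⟨g.1 0, g.2.1⟩
      invFun := fun x => ⟨Fin.cons x.1 0, x.2, fun i => Fin.cons_succ _ _ i⟩
      left_inv := fun ⟨_, _, hg⟩ => Subtype.ext <| funext <|
        Fin.cases rfl fun i => (hg i).symm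
      right_inv := fun _ => rfl }

theorem second_ruling_system_iff {R : Type*} [CommRing R] (a15 a25 a24 a35 a34 a33 : ℤ)
    (g : Fin 4 → R) :
    (Matrix.vecMul g ((!![0, a15, 0, 0; 0, 0, 0, 0; 0, 0, 0, 1; 0, 0, -1, 0] :
          Matrix (Fin 4) (Fin 4) ℤ).map (Int.cast : ℤ → R)) = 0 ∧
      Matrix.vecMul g ((!![0, a25, a24, 0; 0, 0, 0, 1; 0, 0, 0, 0; 0, 0, 0, 0] :
          Matrix (Fin 4) (Fin 4) ℤ).map (Int.cast : ℤ → R)) = 0 ∧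
      Matrix.vecMul g ((!![0, a35, a34, a33; 0, 0, 0, 0; 0, 0, 0, 0; 0, 0, 0, 0] :
          Matrix (Fin 4) (Fin 4) ℤ).map (Int.cast : ℤ → R)) = 0) ↔
    ((a15 : R) * g 0 = 0 ∧ (a25 : R) * g 0 = 0 ∧ (a24 : R) * g 0 = 0 ∧
        (a35 : R) * g 0 = 0 ∧ (a34 : R) * g 0 = 0 ∧ (a33 : R) * g 0 = 0) ∧
      ∀ i : Fin 3, g i.succ = 0 := by
  simp only [funext_iff, Fin.forall_fin_succ]
  simp only [Matrix.vecMul, dotProduct, Int.reduceNeg, Fin.isValue, Matrix.map_apply,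
    Matrix.of_apply, Matrix.cons_val', Matrix.cons_val_zero, Matrix.cons_val_fin_one,
    Fin.sum_univ_four, Int.cast_zero, mul_comm, zero_mul, Matrix.cons_val_one, add_zero,
    Matrix.cons_val, Pi.zero_apply, Fin.succ_zero_eq_one, Fin.succ_one_eq_two, Int.cast_neg,
    Int.cast_one, neg_mul, one_mul, zero_add, neg_eq_zero, Fin.reduceSucc, Matrix.cons_val_succ,
    IsEmpty.forall_iff, and_true, true_and]
  tauto

theorem weight_plane_second_ruling_general (p : ℕ) (hp : p.Prime) (r : ℕ)
    (a15 a25 a24 a35 a34 a33 : ℤ)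
    (h15 : a15 ≠ 0) (h25 : a25 ≠ 0) (h24 : a24 ≠ 0)
    (h35 : a35 ≠ 0) (h34 : a34 ≠ 0) (h33 : a33 ≠ 0) :
    Nat.card {g : Fin 4 → ZMod (p ^ r) //
      Matrix.vecMul g ((!![0, a15, 0, 0; 0, 0, 0, 0; 0, 0, 0, 1; 0, 0, -1, 0] :
          Matrix (Fin 4) (Fin 4) ℤ).map (Int.cast : ℤ → ZMod (p ^ r))) = 0 ∧
      Matrix.vecMul g ((!![0, a25, a24, 0; 0, 0, 0, 1; 0, 0, 0, 0; 0, 0, 0, 0] :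
          Matrix (Fin 4) (Fin 4) ℤ).map (Int.cast : ℤ → ZMod (p ^ r))) = 0 ∧
      Matrix.vecMul g ((!![0, a35, a34, a33; 0, 0, 0, 0; 0, 0, 0, 0; 0, 0, 0, 0] :
          Matrix (Fin 4) (Fin 4) ℤ).map (Int.cast : ℤ → ZMod (p ^ r))) = 0} =
    p ^ (min r (min (padicValInt p a15) (min (padicValInt p a25) (min (padicValInt p a24)
      (min (padicValInt p a35) (min (padicValInt p a34) (padicValInt p a33))))))) := by
  have := Fact.mk hp
  set m := min r (min (padicValInt p a15) (min (padicValInt p a25) (min (padicValInt p a24)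
      (min (padicValInt p a35) (min (padicValInt p a34) (padicValInt p a33))))))
  have hpr : (p : ZMod (p ^ r)) ^ r = 0 := by rw [← Nat.cast_pow, ZMod.natCast_self]
  have htorsion : ∀ x : ZMod (p ^ r),
      ((a15 : ZMod (p ^ r)) * x = 0 ∧ (a25 : ZMod (p ^ r)) * x = 0 ∧
        (a24 : ZMod (p ^ r)) * x = 0 ∧ (a35 : ZMod (p ^ r)) * x = 0 ∧
        (a34 : ZMod (p ^ r)) * x = 0 ∧ (a33 : ZMod (p ^ r)) * x = 0) ↔
      (p : ZMod (p ^ r)) ^ m * x = 0 := fun x => by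
    simp only [m, pow_min_mul_eq_zero_iff, hpr, zero_mul, true_and,
      ZMod.intCast_mul_eq_zero_iff h15, ZMod.intCast_mul_eq_zero_iff h25,
      ZMod.intCast_mul_eq_zero_iff h24, ZMod.intCast_mul_eq_zero_iff h35,
      ZMod.intCast_mul_eq_zero_iff h34, ZMod.intCast_mul_eq_zero_iff h33]
  calc _ = Nat.card {g : Fin 4 → ZMod (p ^ r) //
          (p : ZMod (p ^ r)) ^ m * g 0 = 0 ∧ ∀ i : Fin 3, g i.succ = 0} :=
        Nat.card_congr <| Equiv.subtypeEquivRight fun g => by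
          rw [second_ruling_system_iff, htorsion]
    _ = Nat.card {x : ZMod (p ^ r) // (p : ZMod (p ^ r)) ^ m * x = 0} :=
        Fin.card_subtype_head_tail_eq_zero fun x => (p : ZMod (p ^ r)) ^ m * x = 0
    _ = p ^ m := ZMod.card_pow_mul_eq_zero (min_le_left _ _)

/-- Counting solutions of the congruence system attached to a lattice lifting a plane in the
second ruling of the Pfaffian quadric of `F_{2,4}`: the number of `g ∈ (ℤ/p^rℤ)^4` with
`gMᵢ ≡ 0 (mod p^r)` for `i = 1,2,3` equals
`p^{min(r, v(a₁₅), v(a₂₅), v(a₂₄), v(a₃₅), v(a₃₄), v(a₃₃))}`. -/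
theorem weight_plane_second_ruling (p : ℕ) (hp : p.Prime) (r : ℕ) (hr : 1 ≤ r)
    (a15 a25 a24 a35 a34 a33 : ℤ)
    (h15 : a15 ≠ 0) (h25 : a25 ≠ 0) (h24 : a24 ≠ 0)
    (h35 : a35 ≠ 0) (h34 : a34 ≠ 0) (h33 : a33 ≠ 0)
    (hp15 : (p : ℤ) ∣ a15) (hp25 : (p : ℤ) ∣ a25) (hp24 : (p : ℤ) ∣ a24)
    (hp35 : (p : ℤ) ∣ a35) (hp34 : (p : ℤ) ∣ a34) (hp33 : (p : ℤ) ∣ a33) :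
    Nat.card {g : Fin 4 → ZMod (p ^ r) //
      Matrix.vecMul g ((!![0, a15, 0, 0; 0, 0, 0, 0; 0, 0, 0, 1; 0, 0, -1, 0] :
          Matrix (Fin 4) (Fin 4) ℤ).map (Int.cast : ℤ → ZMod (p ^ r))) = 0 ∧
      Matrix.vecMul g ((!![0, a25, a24, 0; 0, 0, 0, 1; 0, 0, 0, 0; 0, 0, 0, 0] :
          Matrix (Fin 4) (Fin 4) ℤ).map (Int.cast : ℤ → ZMod (p ^ r))) = 0 ∧
      Matrix.vecMul g ((!![0, a35, a34, a33; 0, 0, 0, 0; 0, 0, 0, 0; 0, 0, 0, 0] :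
          Matrix (Fin 4) (Fin 4) ℤ).map (Int.cast : ℤ → ZMod (p ^ r))) = 0} =
    p ^ (min r (min (padicValInt p a15) (min (padicValInt p a25) (min (padicValInt p a24)
      (min (padicValInt p a35) (min (padicValInt p a34) (padicValInt p a33))))))) :=
  weight_plane_second_ruling_general p hp r a15 a25 a24 a35 a34 a33 h15 h25 h24 h35 h34 h33
end

section
/- Let p be a prime, r_1, r_2 ≥ 0 and r_3 ≥ 1 integers, R = r_1 + r_2 + r_3, and a_{15}, a_{25}, a_{24}, a_{35}, a_{34}, a_{33} nonzero integers divisible by p. Let M_1 have rows (0,a_{15},0,0), (−a_{15},0,0,0), (0,0,0,1), (0,0,−1,0); M_2 have rows (0,a_{25},a_{24},0), (0,0,0,1), (0,0,0,0), (0,0,0,0); and M_3 have rows (0,a_{35},a_{34},a_{33}), (0,0,0,0), (0,0,0,0), (0,0,0,0). Then the number of row vectors g ∈ (ℤ/p^Rℤ)^4 satisfying gM_1 ≡ 0 (mod p^R), gM_2 ≡ 0 (mod p^{r_2+r_3}) and gM_3 ≡ 0 (mod p^{r_3}) equals p^{min{r_1, v_p(a_{15})} + min{R, v_p(a_{15}),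 v_p(a_{25})+r_1, v_p(a_{24})+r_1, v_p(a_{35})+r_1+r_2, v_p(a_{34})+r_1+r_2, v_p(a_{33})+r_1+r_2}}. (This computes the weight w'(Λ') = 7r_3 + 6r_2 + 5r_1 minus these two minima, for mixed lattices lifting a plane–line–point flag on the Pfaffian quadric of F_{2,4}.) -/
lemma pow_dvd_mul_int (p : ℕ) (hp : p.Prime) (a : ℤ) (ha : a ≠ 0) (e : ℕ) (x : ℤ) :
    (p:ℤ)^e ∣ a * x ↔ (p:ℤ)^(e - padicValInt p a) ∣ x := by
  haveI : Fact p.Prime := ⟨hp⟩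
  set v := padicValInt p a with hv
  obtain ⟨b, hb⟩ := padicValInt_dvd (p := p) a
  have hpb : ¬ (p:ℤ) ∣ b := by
    rintro ⟨c, rfl⟩
    have hd : (p:ℤ)^(v+1) ∣ a := ⟨c, by rw [hb]; ring⟩
    rcases (padicValInt_dvd_iff (v+1) a).mp hd with h | h
    · exact ha h
    · omega
  rcases le_or_gt e v with hev | hev
  · simp only [Nat.sub_eq_zero_of_le hev, pow_zero, one_dvd, iff_true]
    exact dvd_mul_of_dvd_left ((pow_dvd_pow _ hev).trans (padicValInt_dvd a)) x
  · have hpprime : Prime (p:ℤ) := Nat.prime_iff_prime_int.mp hp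
    have hve : v + (e - v) = e := by omega
    constructor
    · intro h
      have h2 : (p:ℤ)^v * (p:ℤ)^(e-v) ∣ (p:ℤ)^v * (b * x) := by
        rw [← pow_add, hve]
        have : a * x = (p:ℤ)^v * (b*x) := by rw [hb]; ring
        rwa [this] at h
      have h3 : (p:ℤ)^(e-v) ∣ b * x :=
        (mul_dvd_mul_iff_left (pow_ne_zero v (Int.natCast_ne_zero.mpr hp.pos.ne'))).mp h2
      exact hpprime.pow_dvd_of_dvd_mul_left (e-v) hpb h3
    · rintro ⟨w, rfl⟩
      have hpe : (p:ℤ)^v * (p:ℤ)^(e-v) = (p:ℤ)^e := by rw [← pow_add, hve]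
      exact ⟨b * w, by rw [hb, ← hpe]; ring⟩

lemma divByPow_intCast {n : ℕ} [NeZero n] (p e : ℕ) (hd : p^e ∣ n) (z : ℤ) :
    DivByPow n p e ((z : ZMod n)) ↔ (p:ℤ)^e ∣ z := by
  have h1 : ((p:ℤ))^e ∣ (n:ℤ) := by exact_mod_cast Int.natCast_dvd_natCast.mpr hd
  constructor
  · rintro ⟨w, hw⟩
    have hw2 : ((((p:ℤ)^e * (w.val : ℤ) : ℤ)) : ZMod n) = (z : ZMod n) := by
      rw [hw]; push_cast
      rw [ZMod.natCast_val, ZMod.cast_id]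
    have h2 : (n:ℤ) ∣ z - (p:ℤ)^e * (w.val:ℤ) := ((ZMod.intCast_eq_intCast_iff _ _ _).mp hw2).dvd
    have h3 : (p:ℤ)^e ∣ z - (p:ℤ)^e * (w.val:ℤ) := h1.trans h2
    have h4 : (p:ℤ)^e ∣ (p:ℤ)^e * (w.val:ℤ) := dvd_mul_right _ _
    have := dvd_add h3 h4
    rwa [sub_add_cancel] at this
  · rintro ⟨w, rfl⟩
    exact ⟨((w : ZMod n)), by push_cast; ring⟩

lemma key (p : ℕ) (hp : p.Prime) (R e : ℕ) (he : e ≤ R) (a : ℤ) (ha : a ≠ 0)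
    (x : ZMod (p^R)) :
    DivByPow (p^R) p e (x * (a : ZMod (p^R))) ↔ p^(e - padicValInt p a) ∣ x.val := by
  haveI : NeZero (p^R) := ⟨pow_ne_zero _ hp.pos.ne'⟩
  have hx : x * (a : ZMod (p^R)) = (((a * (x.val:ℤ)) : ℤ) : ZMod (p^R)) := by
    push_cast
    rw [ZMod.natCast_val, ZMod.cast_id, mul_comm]
  rw [hx, divByPow_intCast p e (pow_dvd_pow p he) _, pow_dvd_mul_int p hp a ha e _]
  constructor <;> intro h <;> exact_mod_cast h

lemma keyzero (p : ℕ) (hp : p.Prime) (R : ℕ) (a : ℤ) (ha : a ≠ 0) (x : ZMod (p^R)) :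
    x * (a : ZMod (p^R)) = 0 ↔ p^(R - padicValInt p a) ∣ x.val := by
  rw [← key p hp R R le_rfl a ha x]
  constructor
  · intro h; exact ⟨0, by rw [h, mul_zero]⟩
  · rintro ⟨z, hz⟩
    rw [hz, ← Nat.cast_pow, ZMod.natCast_self, zero_mul]

lemma keyone (p : ℕ) (hp : p.Prime) (R e : ℕ) (he : e ≤ R) (x : ZMod (p^R)) :
    DivByPow (p^R) p e x ↔ p^e ∣ x.val := by
  have h := key p hp R e he 1 one_ne_zero x
  rwa [Int.cast_one, mul_one, padicValInt.one, Nat.sub_zero] at h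

lemma divByPow_zero (n p e : ℕ) : DivByPow n p e 0 := ⟨0, (mul_zero _).symm⟩

lemma card_dvd_val (p : ℕ) (hp : p.Prime) (R K : ℕ) (hK : K ≤ R) :
    Nat.card {x : ZMod (p^R) // p^K ∣ x.val} = p^(R-K) := by
  have hdpos : 0 < p^K := pow_pos hp.pos K
  have hn : p^K * p^(R-K) = p^R := by rw [← pow_add]; congr 1; omega
  haveI : NeZero (p^R) := ⟨pow_ne_zero _ hp.pos.ne'⟩
  have hlt : ∀ m : Fin (p^(R-K)), p^K * m.1 < p^R := by
    intro m
    calc p^K * m.1 < p^K * p^(R-K) := mul_lt_mul_of_pos_left m.2 hdpos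
    _ = p^R := hn
  refine Nat.card_eq_of_equiv_fin ?_
  refine ⟨fun x => ⟨x.1.val / p^K, ?_⟩, fun m => ⟨((p^K * m.1 : ℕ) : ZMod (p^R)), ?_⟩, ?_, ?_⟩
  · rw [Nat.div_lt_iff_lt_mul hdpos]
    calc x.1.val < p^R := x.1.val_lt
    _ = p^(R-K) * p^K := by rw [mul_comm]; exact hn.symm
  · rw [ZMod.val_natCast_of_lt (hlt m)]
    exact dvd_mul_right _ _
  · intro x
    apply Subtype.ext
    simp only
    rw [Nat.mul_div_cancel' x.2, ZMod.natCast_val, ZMod.cast_id]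
  · intro m
    apply Fin.ext
    simp only
    rw [ZMod.val_natCast_of_lt (hlt m), Nat.mul_div_cancel_left _ hdpos]

def prodEquiv {n : ℕ} (P Q : ZMod n → Prop) :
    {g : Fin 4 → ZMod n // P (g 0) ∧ Q (g 1) ∧ g 2 = 0 ∧ g 3 = 0} ≃
      ({x : ZMod n // P x} × {x : ZMod n // Q x}) where
  toFun g := (⟨g.1 0, g.2.1⟩, ⟨g.1 1, g.2.2.1⟩)
  invFun x := ⟨![x.1.1, x.2.1, 0, 0], x.1.2, x.2.2, rfl, rfl⟩
  left_inv g := by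
    apply Subtype.ext
    funext i
    fin_cases i
    · rfl
    · rfl
    · exact g.2.2.2.1.symm
    · exact g.2.2.2.2.symm
  right_inv x := rfl

lemma dvd_max_iff (p a b m : ℕ) : p^(max a b) ∣ m ↔ p^a ∣ m ∧ p^b ∣ m := by
  constructor
  · intro h
    exact ⟨(pow_dvd_pow p (le_max_left a b)).trans h, (pow_dvd_pow p (le_max_right a b)).trans h⟩
  · rintro ⟨h1, h2⟩
    rcases le_total a b with h | h
    · rwa [max_eq_right h]
    · rwa [max_eq_left h]

lemma fold_sub_max (R x y z w : ℕ) (h1 : R - x = min R w) (h2 : R - y = min R z) :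
    R - max x y = min R (min w z) := by omega

lemma arith_l15 (R v : ℕ) : R - (R - v) = min R v := by omega
lemma arith_l25 (r1 r2 r3 v : ℕ) :
    r1+r2+r3 - ((r2+r3) - v) = min (r1+r2+r3) (v + r1) := by omega
lemma arith_l35 (r1 r2 r3 v : ℕ) :
    r1+r2+r3 - (r3 - v) = min (r1+r2+r3) (v + r1 + r2) := by omega
lemma arith_E1 (r1 r2 r3 v : ℕ) :
    r1+r2+r3 - max ((r1+r2+r3) - v) (r2+r3) = min r1 v := by omega
lemma arith_K2R (r1 r2 r3 v : ℕ) : max ((r1+r2+r3) - v) (r2+r3) ≤ r1+r2+r3 := by omega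
lemma arith_K1R (r1 r2 r3 a b c d e f : ℕ) :
    max ((r1+r2+r3) - a) (max ((r2+r3) - b) (max ((r2+r3) - c)
      (max (r3 - d) (max (r3 - e) (r3 - f))))) ≤ r1+r2+r3 := by omega

set_option maxHeartbeats 1000000

/-- Counting solutions of the congruence system attached to a mixed lattice lifting a
plane–line–point flag on the Pfaffian quadric of `F_{2,4}`: with `R = r₁ + r₂ + r₃`, the number
of `g ∈ (ℤ/p^Rℤ)^4` with `gM₁ ≡ 0 (mod p^R)`, `gM₂ ≡ 0 (mod p^{r₂+r₃})`, `gM₃ ≡ 0 (mod p^{r₃})`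
equals `p^{min(r₁,v(a₁₅)) + min(R, v(a₁₅), v(a₂₅)+r₁, v(a₂₄)+r₁, v(a₃₅)+r₁+r₂, v(a₃₄)+r₁+r₂,
v(a₃₃)+r₁+r₂)}`. -/
theorem weight_mixed_lattice_plane_line_point (p : ℕ) (hp : p.Prime) (r1 r2 r3 : ℕ)
    (hr3 : 1 ≤ r3)
    (a15 a25 a24 a35 a34 a33 : ℤ)
    (h15 : a15 ≠ 0) (h25 : a25 ≠ 0) (h24 : a24 ≠ 0)
    (h35 : a35 ≠ 0) (h34 : a34 ≠ 0) (h33 : a33 ≠ 0)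
    (hp15 : (p : ℤ) ∣ a15) (hp25 : (p : ℤ) ∣ a25) (hp24 : (p : ℤ) ∣ a24)
    (hp35 : (p : ℤ) ∣ a35) (hp34 : (p : ℤ) ∣ a34) (hp33 : (p : ℤ) ∣ a33) :
    Nat.card {g : Fin 4 → ZMod (p ^ (r1 + r2 + r3)) //
      Matrix.vecMul g ((!![0, a15, 0, 0; -a15, 0, 0, 0; 0, 0, 0, 1; 0, 0, -1, 0] :
          Matrix (Fin 4) (Fin 4) ℤ).map (Int.cast : ℤ → ZMod (p ^ (r1 + r2 + r3)))) = 0 ∧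
      (∀ j : Fin 4, DivByPow (p ^ (r1 + r2 + r3)) p (r2 + r3)
        (Matrix.vecMul g ((!![0, a25, a24, 0; 0, 0, 0, 1; 0, 0, 0, 0; 0, 0, 0, 0] :
          Matrix (Fin 4) (Fin 4) ℤ).map (Int.cast : ℤ → ZMod (p ^ (r1 + r2 + r3)))) j)) ∧
      (∀ j : Fin 4, DivByPow (p ^ (r1 + r2 + r3)) p r3
        (Matrix.vecMul g ((!![0, a35, a34, a33; 0, 0, 0, 0; 0, 0, 0, 0; 0, 0, 0, 0] :
          Matrix (Fin 4) (Fin 4) ℤ).map (Int.cast : ℤ → ZMod (p ^ (r1 + r2 + r3)))) j))} =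
    p ^ (min r1 (padicValInt p a15) +
      min (r1 + r2 + r3) (min (padicValInt p a15) (min (padicValInt p a25 + r1)
        (min (padicValInt p a24 + r1) (min (padicValInt p a35 + r1 + r2)
          (min (padicValInt p a34 + r1 + r2) (padicValInt p a33 + r1 + r2))))))) := by
  set R := r1 + r2 + r3 with hR
  haveI : NeZero (p ^ R) := ⟨pow_ne_zero _ hp.pos.ne'⟩
  set v15 := padicValInt p a15
  set v25 := padicValInt p a25
  set v24 := padicValInt p a24
  set v35 := padicValInt p a35
  set v34 := padicValInt p a34
  set v33 := padicValInt p a33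
  set K1 := max (R - v15) (max ((r2+r3) - v25) (max ((r2+r3) - v24)
    (max (r3 - v35) (max (r3 - v34) (r3 - v33))))) with hK1
  set K2 := max (R - v15) (r2 + r3) with hK2
  have hK1R : K1 ≤ R := by rw [hK1, hR]; exact arith_K1R r1 r2 r3 v15 v25 v24 v35 v34 v33
  have hK2R : K2 ≤ R := by rw [hK2, hR]; exact arith_K2R r1 r2 r3 v15
  have hE1 : R - K2 = min r1 v15 := by rw [hK2, hR]; exact arith_E1 r1 r2 r3 v15
  have he23 : r2 + r3 ≤ R := by rw [hR, Nat.add_assoc]; exact Nat.le_add_left _ _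
  have he3 : r3 ≤ R := by rw [hR]; exact Nat.le_add_left _ _
  have hiff : ∀ g : Fin 4 → ZMod (p ^ R),
      (Matrix.vecMul g ((!![0, a15, 0, 0; -a15, 0, 0, 0; 0, 0, 0, 1; 0, 0, -1, 0] :
          Matrix (Fin 4) (Fin 4) ℤ).map (Int.cast : ℤ → ZMod (p ^ R))) = 0 ∧
      (∀ j : Fin 4, DivByPow (p ^ R) p (r2 + r3)
        (Matrix.vecMul g ((!![0, a25, a24, 0; 0, 0, 0, 1; 0, 0, 0, 0; 0, 0, 0, 0] :
          Matrix (Fin 4) (Fin 4) ℤ).map (Int.cast : ℤ → ZMod (p ^ R))) j)) ∧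
      (∀ j : Fin 4, DivByPow (p ^ R) p r3
        (Matrix.vecMul g ((!![0, a35, a34, a33; 0, 0, 0, 0; 0, 0, 0, 0; 0, 0, 0, 0] :
          Matrix (Fin 4) (Fin 4) ℤ).map (Int.cast : ℤ → ZMod (p ^ R))) j))) ↔
      (p^K1 ∣ (g 0).val ∧ p^K2 ∣ (g 1).val ∧ g 2 = 0 ∧ g 3 = 0) := by
    intro g
    constructor
    · rintro ⟨h1, h2, h3⟩
      have e1 := congrFun h1 0
      have e2 := congrFun h1 1
      have e3 := congrFun h1 2
      have e4 := congrFun h1 3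
      have f2 := h2 1
      have f3 := h2 2
      have f4 := h2 3
      have m2 := h3 1
      have m3 := h3 2
      have m4 := h3 3
      simp [Matrix.vecMul, dotProduct, Fin.sum_univ_four, Matrix.vecHead, Matrix.vecTail] at e1 e2 e3 e4 f2 f3 f4 m2 m3 m4
      refine ⟨?_, ?_, e4, e3⟩
      · rw [hK1, dvd_max_iff, dvd_max_iff, dvd_max_iff, dvd_max_iff, dvd_max_iff]
        exact ⟨(keyzero p hp R a15 h15 (g 0)).mp e2,
          (key p hp R (r2+r3) he23 a25 h25 (g 0)).mp f2,
          (key p hp R (r2+r3) he23 a24 h24 (g 0)).mp f3,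
          (key p hp R r3 he3 a35 h35 (g 0)).mp m2,
          (key p hp R r3 he3 a34 h34 (g 0)).mp m3,
          (key p hp R r3 he3 a33 h33 (g 0)).mp m4⟩
      · rw [hK2, dvd_max_iff]
        exact ⟨(keyzero p hp R a15 h15 (g 1)).mp e1,
          (keyone p hp R (r2+r3) he23 (g 1)).mp f4⟩
    · rintro ⟨d0, d1, hz2, hz3⟩
      have d15a : p^(R - v15) ∣ (g 0).val := (pow_dvd_pow p (by omega : R - v15 ≤ K1)).trans d0
      have d25 : p^((r2+r3) - v25) ∣ (g 0).val := (pow_dvd_pow p (by omega : (r2+r3) - v25 ≤ K1)).trans d0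
      have d24 : p^((r2+r3) - v24) ∣ (g 0).val := (pow_dvd_pow p (by omega : (r2+r3) - v24 ≤ K1)).trans d0
      have d35 : p^(r3 - v35) ∣ (g 0).val := (pow_dvd_pow p (by omega : r3 - v35 ≤ K1)).trans d0
      have d34 : p^(r3 - v34) ∣ (g 0).val := (pow_dvd_pow p (by omega : r3 - v34 ≤ K1)).trans d0
      have d33 : p^(r3 - v33) ∣ (g 0).val := (pow_dvd_pow p (by omega : r3 - v33 ≤ K1)).trans d0
      have d15b : p^(R - v15) ∣ (g 1).val := (pow_dvd_pow p (by omega : R - v15 ≤ K2)).trans d1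
      have d1' : p^(r2+r3) ∣ (g 1).val := (pow_dvd_pow p (by omega : r2+r3 ≤ K2)).trans d1
      refine ⟨?_, ?_, ?_⟩
      · funext j
        fin_cases j
        · simp [Matrix.vecMul, dotProduct, Fin.sum_univ_four, Matrix.vecHead, Matrix.vecTail, hz2, hz3]
          exact (keyzero p hp R a15 h15 (g 1)).mpr d15b
        · simp [Matrix.vecMul, dotProduct, Fin.sum_univ_four, Matrix.vecHead, Matrix.vecTail, hz2, hz3]
          exact (keyzero p hp R a15 h15 (g 0)).mpr d15a
        · simp [Matrix.vecMul, dotProduct, Fin.sum_univ_four, Matrix.vecHead, Matrix.vecTail, hz2, hz3]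
        · simp [Matrix.vecMul, dotProduct, Fin.sum_univ_four, Matrix.vecHead, Matrix.vecTail, hz2, hz3]
      · intro j
        fin_cases j
        · simp [Matrix.vecMul, dotProduct, Fin.sum_univ_four, Matrix.vecHead, Matrix.vecTail]
          exact divByPow_zero _ _ _
        · simp [Matrix.vecMul, dotProduct, Fin.sum_univ_four, Matrix.vecHead, Matrix.vecTail]
          exact (key p hp R (r2+r3) he23 a25 h25 (g 0)).mpr d25
        · simp [Matrix.vecMul, dotProduct, Fin.sum_univ_four, Matrix.vecHead, Matrix.vecTail]
          exact (key p hp R (r2+r3) he23 a24 h24 (g 0)).mpr d24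
        · simp [Matrix.vecMul, dotProduct, Fin.sum_univ_four, Matrix.vecHead, Matrix.vecTail]
          exact (keyone p hp R (r2+r3) he23 (g 1)).mpr d1'
      · intro j
        fin_cases j
        · simp [Matrix.vecMul, dotProduct, Fin.sum_univ_four, Matrix.vecHead, Matrix.vecTail]
          exact divByPow_zero _ _ _
        · simp [Matrix.vecMul, dotProduct, Fin.sum_univ_four, Matrix.vecHead, Matrix.vecTail]
          exact (key p hp R r3 he3 a35 h35 (g 0)).mpr d35
        · simp [Matrix.vecMul, dotProduct, Fin.sum_univ_four, Matrix.vecHead, Matrix.vecTail]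
          exact (key p hp R r3 he3 a34 h34 (g 0)).mpr d34
        · simp [Matrix.vecMul, dotProduct, Fin.sum_univ_four, Matrix.vecHead, Matrix.vecTail]
          exact (key p hp R r3 he3 a33 h33 (g 0)).mpr d33
  have l15 : R - (R - v15) = min R v15 := arith_l15 R v15
  have l25 : R - ((r2+r3) - v25) = min R (v25 + r1) := by rw [hR]; exact arith_l25 r1 r2 r3 v25
  have l24 : R - ((r2+r3) - v24) = min R (v24 + r1) := by rw [hR]; exact arith_l25 r1 r2 r3 v24
  have l35 : R - (r3 - v35) = min R (v35 + r1 + r2) := by rw [hR]; exact arith_l35 r1 r2 r3 v35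
  have l34 : R - (r3 - v34) = min R (v34 + r1 + r2) := by rw [hR]; exact arith_l35 r1 r2 r3 v34
  have l33 : R - (r3 - v33) = min R (v33 + r1 + r2) := by rw [hR]; exact arith_l35 r1 r2 r3 v33
  have c1 : R - max (r3 - v34) (r3 - v33) = min R (min (v34+r1+r2) (v33+r1+r2)) :=
    fold_sub_max _ _ _ _ _ l34 l33
  have c2 : R - max (r3 - v35) (max (r3 - v34) (r3 - v33)) =
      min R (min (v35+r1+r2) (min (v34+r1+r2) (v33+r1+r2))) :=
    fold_sub_max _ _ _ _ _ l35 c1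
  have c3 : R - max ((r2+r3) - v24) (max (r3 - v35) (max (r3 - v34) (r3 - v33))) =
      min R (min (v24+r1) (min (v35+r1+r2) (min (v34+r1+r2) (v33+r1+r2)))) :=
    fold_sub_max _ _ _ _ _ l24 c2
  have c4 : R - max ((r2+r3) - v25) (max ((r2+r3) - v24) (max (r3 - v35)
      (max (r3 - v34) (r3 - v33)))) =
      min R (min (v25+r1) (min (v24+r1) (min (v35+r1+r2) (min (v34+r1+r2) (v33+r1+r2))))) :=
    fold_sub_max _ _ _ _ _ l25 c3
  have hE2 : R - K1 = min R (min v15 (min (v25+r1) (min (v24+r1) (min (v35+r1+r2)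
      (min (v34+r1+r2) (v33+r1+r2)))))) := by
    rw [hK1]
    exact fold_sub_max _ _ _ _ _ l15 c4
  rw [Nat.card_congr ((Equiv.subtypeEquivRight hiff).trans
    (prodEquiv (fun x => p^K1 ∣ x.val) (fun x => p^K2 ∣ x.val)))]
  rw [Nat.card_prod, card_dvd_val p hp R K1 hK1R, card_dvd_val p hp R K2 hK2R, ← pow_add]
  rw [hE2, hE1, Nat.add_comm]
end

section
/- Let p > 1 be a real number, d, i, t, c ≥ 1 and D ≥ 0 integers, and n = c + D. Let T be a real number with T > 0, p^{id+D} T^{d+i−t} < 1 and p^{id+n} T^{d+i} < 1. Then the series ∑_{r=1}^∞ p^{idr} T^{(d+i)r} ∑_{b ∈ {1,…,r}^n} μ_p(r; b) · ( T^{−t·min{r, b_1, …, b_c}} − 1 ) converges and its sum equals p^{di} T^{d+i−t} (1 − T^t) / ( (1 − p^{id+D} T^{d+i−t}) (1 − p^{di+n} T^{d+i}) ). (Here the minimum is taken over r and only the first c of the n coordinates of b. With d = 4, i ∈ {1,2,3}, t = 2 for i = 1 and t = 1 for i = 2,3, this gives the exceptional factor A_{i*} − A_i of the normal zeta function of F_{2,4}.)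 -/
open Finset

noncomputable section

/-- `μ_p(a,b)`: the measure of elements of `pℤ_p/(p^a)` of valuation `b` (for `1 ≤ b ≤ a`). -/
def mu (p : ℝ) (a b : ℕ) : ℝ := if b = a then 1 else p ^ (a - b) * (1 - p⁻¹)

/-- `μ_p(a; b) = ∏_j μ_p(a, b_j)` for a tuple `b`. -/
def muV (p : ℝ) (a : ℕ) {k : ℕ} (b : Fin k → ℕ) : ℝ := ∏ j, mu p a (b j)

/-- `mins r f = min{r, f 0, …, f (k-1)}`. -/
def mins (r : ℕ) {k : ℕ} (f : Fin k → ℕ) : ℕ := (List.ofFn f).foldr min r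

/-!
Writing `A = T^{-t}` and `M_b = min{r, b_1, …, b_c}`, telescope `A^{M_b} - 1 = (A - 1) ∑_{m < M_b} A^m`
and exchange the sums over `b` and `m`. The condition `m < M_b` cuts the box `{1,…,r}^n` down to the
box `{m+1,…,r}^c × {1,…,r}^D`, and `μ_p(r, ·)` sums over `{m,…,r}` to `p^{r-m}`, so the `r`-th term
becomes `C ∑_{m+l=r-1} α^m β^l` with `C = p^{id} T^{d+i} (T^{-t} - 1)`, `α = p^{id+D} T^{d+i-t}` and
`β = p^{id+n} T^{d+i}`: the series is `C` times the Cauchy product of two geometric series.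
-/

lemma sum_mu_Icc {p : ℝ} (hp : p ≠ 0) {m r : ℕ} (hm : m ≤ r) :
    ∑ b ∈ Icc m r, mu p r b = p ^ (r - m) := by
  induction hm using Nat.decreasingInduction with
  | self => simp [mu]
  | of_succ k hk ih =>
    rw [← insert_Icc_add_one_left_eq_Icc hk.le, sum_insert (by simp), ih, mu,
      if_neg hk.ne, show r - k = r - (k + 1) + 1 by omega, pow_succ]
    field_simp
    ring

lemma sum_muV_piFinset (p : ℝ) (r : ℕ) {n : ℕ} (s : Fin n → Finset ℕ) :
    ∑ b ∈ Fintype.piFinset s, muV p r b = ∏ j, ∑ x ∈ s j, mu p r x :=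
  (prod_univ_sum s fun _ => mu p r).symm

lemma le_mins_iff {r x k : ℕ} {f : Fin k → ℕ} : x ≤ mins r f ↔ x ≤ r ∧ ∀ j, x ≤ f j := by
  suffices ∀ l : List ℕ, x ≤ l.foldr min r ↔ x ≤ r ∧ ∀ a ∈ l, x ≤ a by
    simp [mins, this]
  intro l
  induction l with
  | nil => simp
  | cons a l ih => simp only [List.foldr_cons, le_min_iff, ih, List.forall_mem_cons]; tauto

lemma mins_le (r : ℕ) {k : ℕ} (f : Fin k → ℕ) : mins r f ≤ r := (le_mins_iff.mp le_rfl).1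

lemma filter_lt_mins_eq_piFinset {r m : ℕ} (c D : ℕ) (hm : m < r) :
    {b ∈ Fintype.piFinset (fun _ : Fin (c + D) => Icc 1 r) |
        m < mins r (fun j : Fin c => b (Fin.castAdd D j))} =
      Fintype.piFinset (Fin.append (fun _ : Fin c => Icc (m + 1) r) (fun _ : Fin D => Icc 1 r)) := by
  ext b
  simp only [mem_filter, Fintype.mem_piFinset, Fin.forall_fin_add, Fin.append_left,
    Fin.append_right, mem_Icc, Nat.lt_iff_add_one_le, le_mins_iff]
  grind

lemma sum_muV_filter_lt_mins {p : ℝ} (hp : p ≠ 0) {r m : ℕ} (c D : ℕ) (hm : m < r) :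
    ∑ b ∈ Fintype.piFinset (fun _ : Fin (c + D) => Icc 1 r) with
        m < mins r (fun j : Fin c => b (Fin.castAdd D j)), muV p r b =
      (p ^ (r - (m + 1))) ^ c * (p ^ (r - 1)) ^ D := by
  rw [filter_lt_mins_eq_piFinset c D hm, sum_muV_piFinset, Fin.prod_univ_add]
  simp only [Fin.append_left, Fin.append_right, sum_mu_Icc hp hm, sum_mu_Icc hp (by omega : 1 ≤ r),
    prod_const, card_univ, Fintype.card_fin]

lemma pow_sub_one_eq_sum_range_filter {R : Type*} [Ring R] (A : R) {M r : ℕ} (hM : M ≤ r) :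
    A ^ M - 1 = (∑ m ∈ range r with m < M, A ^ m) * (A - 1) := by
  rw [← geom_sum_mul]
  congr 2
  ext m
  simp only [mem_filter, mem_range]
  omega

lemma sum_muV_mul_pow_mins_sub_one {p : ℝ} (hp : p ≠ 0) (A : ℝ) (r c D : ℕ) :
    ∑ b ∈ Fintype.piFinset (fun _ : Fin (c + D) => Icc 1 r),
        muV p r b * (A ^ mins r (fun j : Fin c => b (Fin.castAdd D j)) - 1) =
      (A - 1) * ∑ m ∈ range r, A ^ m * ((p ^ (r - (m + 1))) ^ c * (p ^ (r - 1)) ^ D) := by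
  set box := Fintype.piFinset (fun _ : Fin (c + D) => Icc 1 r)
  let M (b : Fin (c + D) → ℕ) : ℕ := mins r (fun j : Fin c => b (Fin.castAdd D j))
  calc ∑ b ∈ box, muV p r b * (A ^ M b - 1)
      = (A - 1) * ∑ b ∈ box, ∑ m ∈ range r with m < M b, A ^ m * muV p r b := by
        rw [mul_sum]
        refine sum_congr rfl fun b _ => ?_
        rw [pow_sub_one_eq_sum_range_filter A (mins_le r _), sum_mul, mul_sum, mul_sum]
        exact sum_congr rfl fun _ _ => by ring
    _ = (A - 1) * ∑ m ∈ range r, ∑ b ∈ box with m < M b, A ^ m * muV p r b := by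
        rw [sum_comm' (t' := range r) (s' := fun m => {b ∈ box | m < M b})
          fun b m => by simp only [mem_filter, mem_range]; tauto]
    _ = _ := by
        rw [sum_congr rfl fun m hm => by
          rw [← mul_sum, sum_muV_filter_lt_mins hp c D (mem_range.mp hm)]]

lemma pow_mul_sum_muV_mul_pow_mins_sub_one {p : ℝ} (hp : p ≠ 0) (x A : ℝ) (e c D k : ℕ) :
    (p ^ e * x) ^ (k + 1) *
        ∑ b ∈ Fintype.piFinset (fun _ : Fin (c + D) => Icc 1 (k + 1)),
          muV p (k + 1) b * (A ^ mins (k + 1) (fun j : Fin c => b (Fin.castAdd D j)) - 1) =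
      p ^ e * x * (A - 1) *
        ∑ m ∈ range (k + 1), (p ^ (e + D) * x * A) ^ m * (p ^ (e + (c + D)) * x) ^ (k - m) := by
  rw [sum_muV_mul_pow_mins_sub_one hp, mul_sum, mul_sum, mul_sum]
  refine sum_congr rfl fun m hm => ?_
  obtain ⟨l, rfl⟩ := Nat.exists_eq_add_of_le (Nat.lt_succ_iff.mp (mem_range.mp hm))
  rw [Nat.add_sub_add_right, Nat.add_sub_cancel, Nat.add_sub_cancel_left]
  ring

lemma hasSum_sum_range_geometric_mul {K : Type*} [NormedField K] [CompleteSpace K] {α β : K}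
    (hα : ‖α‖ < 1) (hβ : ‖β‖ < 1) :
    HasSum (fun k => ∑ m ∈ range (k + 1), α ^ m * β ^ (k - m)) ((1 - α)⁻¹ * (1 - β)⁻¹) := by
  have summable_norm_pow {ξ : K} (hξ : ‖ξ‖ < 1) : Summable fun n => ‖ξ ^ n‖ := by
    simpa [norm_pow] using summable_geometric_of_lt_one (norm_nonneg ξ) hξ
  simpa only [tsum_geometric_of_norm_lt_one hα, tsum_geometric_of_norm_lt_one hβ] using
    hasSum_sum_range_mul_of_summable_norm (summable_norm_pow hα) (summable_norm_pow hβ)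

theorem exceptional_factor_sum_general (p T : ℝ) (hp : 1 < p) (d i t c D : ℕ)
    (hT : 0 < T)
    (h1 : p ^ (i * d + D) * T ^ ((d : ℤ) + i - t) < 1)
    (h2 : p ^ (i * d + (c + D)) * T ^ (d + i) < 1) :
    HasSum (fun k : ℕ =>
        p ^ (i * d * (k + 1)) * T ^ ((d + i) * (k + 1)) *
          ∑ b ∈ Fintype.piFinset (fun _ : Fin (c + D) => Icc 1 (k + 1)),
            muV p (k + 1) b *
              (T ^ (-(t * mins (k + 1) (fun j : Fin c => b (Fin.castAdd D j)) : ℤ)) - 1))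
      (p ^ (d * i) * T ^ ((d : ℤ) + i - t) * (1 - T ^ t) /
        ((1 - p ^ (i * d + D) * T ^ ((d : ℤ) + i - t)) *
          (1 - p ^ (d * i + (c + D)) * T ^ (d + i)))) := by
  have hp0 : 0 < p := zero_lt_one.trans hp
  set A : ℝ := (T ^ t)⁻¹
  have hA (M : ℕ) : T ^ (-(t * M : ℤ)) = A ^ M := by
    rw [zpow_neg, ← Nat.cast_mul, zpow_natCast, pow_mul, inv_pow]
  have hT_zpow : T ^ ((d : ℤ) + i - t) = T ^ (d + i) * A := by
    rw [sub_eq_add_neg, zpow_add₀ hT.ne', ← Nat.cast_add, zpow_natCast, zpow_neg, zpow_natCast]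
  set α := p ^ (i * d + D) * T ^ (d + i) * A
  set β := p ^ (i * d + (c + D)) * T ^ (d + i)
  have hα : ‖α‖ < 1 :=
    calc ‖α‖ = p ^ (i * d + D) * T ^ ((d : ℤ) + i - t) := by
          rw [Real.norm_of_nonneg (by positivity), hT_zpow, ← mul_assoc]
      _ < 1 := h1
  have hβ : ‖β‖ < 1 := by rwa [Real.norm_of_nonneg (by positivity)]
  set C := p ^ (i * d) * T ^ (d + i) * (A - 1)
  have hvalue : p ^ (i * d) * T ^ ((d : ℤ) + i - t) * (1 - T ^ t) /
      ((1 - p ^ (i * d + D) * T ^ ((d : ℤ) + i - t)) * (1 - p ^ (i * d + (c + D)) * T ^ (d + i))) =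
        C * ((1 - α)⁻¹ * (1 - β)⁻¹) := by
    rw [hT_zpow, div_eq_mul_inv, mul_inv, ← mul_assoc _ _ A]
    congr 1
    · linear_combination -(p ^ (i * d) * T ^ (d + i)) * inv_mul_cancel₀ (pow_ne_zero t hT.ne')
    · simp only [α, β, mul_assoc]
  rw [mul_comm d i, hvalue]
  refine ((hasSum_sum_range_geometric_mul hα hβ).mul_left C).congr_fun fun k => ?_
  rw [pow_mul p (i * d), pow_mul T, ← mul_pow]
  simp only [hA]
  exact pow_mul_sum_muV_mul_pow_mins_sub_one hp0.ne' _ _ _ c D k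

/-- The exceptional factor as a sum: with `n = c + D`,
`Σ_{r≥1} p^{idr} T^{(d+i)r} Σ_{b∈{1,…,r}^n} μ_p(r;b) (T^{-t·min{r,b_1,…,b_c}} − 1)
 = p^{di} T^{d+i−t} (1−T^t) / ((1−p^{id+D}T^{d+i−t})(1−p^{di+n}T^{d+i}))`. -/
theorem exceptional_factor_sum (p T : ℝ) (hp : 1 < p) (d i t c D : ℕ)
    (hd : 1 ≤ d) (hi : 1 ≤ i) (ht : 1 ≤ t) (hc : 1 ≤ c) (hT : 0 < T)
    (h1 : p ^ (i * d + D) * T ^ ((d : ℤ) + i - t) < 1)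
    (h2 : p ^ (i * d + (c + D)) * T ^ (d + i) < 1) :
    HasSum (fun k : ℕ =>
        p ^ (i * d * (k + 1)) * T ^ ((d + i) * (k + 1)) *
          ∑ b ∈ Fintype.piFinset (fun _ : Fin (c + D) => Icc 1 (k + 1)),
            muV p (k + 1) b *
              (T ^ (-(t * mins (k + 1) (fun j : Fin c => b (Fin.castAdd D j)) : ℤ)) - 1))
      (p ^ (d * i) * T ^ ((d : ℤ) + i - t) * (1 - T ^ t) /
        ((1 - p ^ (i * d + D) * T ^ ((d : ℤ) + i - t)) *
          (1 - p ^ (d * i + (c + D)) * T ^ (d + i)))) :=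
  exceptional_factor_sum_general p T hp d i t c D hT h1 h2
end
end

section
/- For every real p ≥ 2 and every real T with 0 < T ≤ p^{−9}, both series S_{12}(p,T) and S_2(p,T) converge absolutely and S_{12}(p,T) = p^{−1} · ( p^8 T^3 / (1 − p^8 T^3) ) · S_2(p,T). (This is the extraction of the lower Igusa factor: A_{1*,2*} − A_{1*,2} = p^{−dim 𝔉_{{1}}} · Y_1/(1−Y_1) · (A_{2*} − A_2) with Y_1 = p^8 T^3.) -/
open Finset

noncomputable section

/-- The `(r₁,r₂)`-term of the series `S₁₂(p,T) = A_{1*,2*} − A_{1*,2}`. -/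
def S12term (p T : ℝ) (r1 r2 : ℕ) : ℝ :=
  p ^ (8 * r2 + 4 * r1) * T ^ (6 * r2 + 5 * r1) *
    ∑ a15 ∈ Icc 1 (r1 + r2), ∑ a14 ∈ Icc 1 (r1 + r2), ∑ a13 ∈ Icc 1 (r1 + r2),
      ∑ a12 ∈ Icc 1 (r1 + r2), ∑ a11 ∈ Icc 1 r1, ∑ a25 ∈ Icc 1 r2, ∑ a24 ∈ Icc 1 r2,
        ∑ a23 ∈ Icc 1 r2, ∑ a22 ∈ Icc 1 r2,
          mu p (r1 + r2) a15 * mu p (r1 + r2) a14 * mu p (r1 + r2) a13 * mu p (r1 + r2) a12 *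
            mu p r1 a11 * mu p r2 a25 * mu p r2 a24 * mu p r2 a23 * mu p r2 a22 *
            (T ^ (-(min r1 a15 +
                min (r1 + r2) (min a15 (min (a25 + r1) (a24 + r1))) : ℤ)) -
              T ^ (-(2 * min r1 a15 : ℤ)))

/-- The `r`-term of the series `S₂(p,T) = A_{2*} − A_2`. -/
def S2term (p T : ℝ) (r : ℕ) : ℝ :=
  p ^ (8 * r) * T ^ (6 * r) *
    ∑ b ∈ Fintype.piFinset (fun _ : Fin 8 => Icc 1 r),
      muV p r b *
        (T ^ (-(min r (min (b 0) (min (b 1) (b 2))) : ℤ)) - 1)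

/-! Both series factor through the same triple sum `igusaCore p T r` over the three
valuations that enter the exponent of `T`; every other valuation sums to a power of `p`,
since `muMass p (m + 1) = p ^ m`. In `S12term` the terms with `a15 ≤ r1` cancel (as
`a24, a25 ≥ 1`, both exponents of `T` equal `-2 a15`), and `a15 = r1 + c` contributes
`T ^ (-2 r1)` times the core of `S2term` at `r2`. So the `(r1, r2)` term of `S₁₂` is
`p⁻¹ (p ^ 8 T ^ 3) ^ r1` times the `r2` term of `S₂`, and the double series is the product
of `S₂` with a geometric series; absolute convergence follows from
`|S2term p T r| ≤ (p ^ 16 T ^ 5) ^ r`. -/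

lemma sum_Icc_one_add {M : Type*} [AddCommMonoid M] (f : ℕ → M) (n r : ℕ) :
    ∑ a ∈ Icc 1 (n + r), f a = ∑ a ∈ Icc 1 n, f a + ∑ c ∈ Icc 1 r, f (n + c) := by
  have hshift : ∑ c ∈ Icc 1 r, f (n + c) = ∑ a ∈ Icc (n + 1) (n + r), f a := by
    rw [← map_add_left_Icc, sum_map]
    rfl
  rw [hshift, Icc_add_one_left_eq_Ioc, ← zero_add 1, Icc_add_one_left_eq_Ioc,
    Icc_add_one_left_eq_Ioc]
  exact (sum_Ioc_consecutive f (Nat.zero_le n) (Nat.le_add_right n r)).symm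

lemma sum_piFinset_const_succ {α M : Type*} [AddCommMonoid M] {n : ℕ} (s : Finset α)
    (f : (Fin (n + 1) → α) → M) :
    ∑ b ∈ Fintype.piFinset (fun _ => s), f b =
      ∑ x ∈ s, ∑ b ∈ Fintype.piFinset (fun _ : Fin n => s), f (Fin.cons x b) := by
  rw [← sum_product']
  refine (sum_equiv (Fin.consEquiv fun _ => α) (fun xb => ?_) (fun _ _ => rfl)).symm
  simp [Fin.consEquiv, Fin.forall_fin_succ]

lemma hasSum_pow_succ {r : ℝ} (h0 : 0 ≤ r) (h1 : r < 1) :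
    HasSum (fun n : ℕ => r ^ (n + 1)) (r / (1 - r)) := by
  simpa only [pow_succ', div_eq_mul_inv] using (hasSum_geometric_of_lt_one h0 h1).mul_left r

lemma pow_mul_pow_lt_one {p T : ℝ} (hp : 1 < p) (hT0 : 0 < T) {k a b : ℕ}
    (hpT : p ^ k * T ≤ 1) (hab : a < k * b) : p ^ a * T ^ b < 1 :=
  calc p ^ a * T ^ b < p ^ (k * b) * T ^ b := by gcongr
    _ = (p ^ k * T) ^ b := by rw [mul_pow, pow_mul]
    _ ≤ 1 := pow_le_one₀ (by positivity) hpT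

lemma abs_zpow_neg_sub_one_le {T : ℝ} (hT0 : 0 < T) (hT1 : T ≤ 1) {e : ℤ} {r : ℕ}
    (he0 : 0 ≤ e) (her : e ≤ r) : |T ^ (-e) - 1| ≤ T⁻¹ ^ r := by
  have hTinv : 1 ≤ T⁻¹ := one_le_inv₀ hT0 |>.mpr hT1
  have hlow : 1 ≤ T⁻¹ ^ e := one_le_zpow₀ hTinv he0
  have hup : T⁻¹ ^ e ≤ T⁻¹ ^ r := by
    simpa only [zpow_natCast] using zpow_le_zpow_right₀ hTinv her
  rw [zpow_neg, ← inv_zpow, abs_of_nonneg (by linarith)]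
  linarith

lemma mu_nonneg {p : ℝ} (hp : 1 ≤ p) (a b : ℕ) : 0 ≤ mu p a b := by
  unfold mu
  split_ifs
  · exact zero_le_one
  · have : p⁻¹ ≤ 1 := inv_le_one_of_one_le₀ hp
    have : 0 ≤ 1 - p⁻¹ := by linarith
    positivity

lemma mu_add_add (p : ℝ) (n a b : ℕ) : mu p (n + a) (n + b) = mu p a b := by
  simp only [mu, add_right_inj, Nat.add_sub_add_left]

def muMass (p : ℝ) (r : ℕ) : ℝ := ∑ b ∈ Icc 1 r, mu p r b

lemma muMass_succ {p : ℝ} (hp : p ≠ 0) (m : ℕ) : muMass p (m + 1) = p ^ m := by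
  rw [muMass]
  induction m with
  | zero => simp [mu]
  | succ k ih =>
    rw [show k + 1 + 1 = 1 + (k + 1) by ring, sum_Icc_one_add]
    simp only [mu_add_add, Icc_self, sum_singleton, ih]
    rw [mu, if_neg (by omega), Nat.add_sub_cancel_left]
    field_simp
    ring

lemma muV_cons (p : ℝ) (a : ℕ) {k : ℕ} (x : ℕ) (b : Fin k → ℕ) :
    muV p a (Fin.cons x b) = mu p a x * muV p a b := by
  simp [muV, Fin.prod_univ_succ]

lemma sum_muV (p : ℝ) (r k : ℕ) :
    ∑ b ∈ Fintype.piFinset (fun _ : Fin k => Icc 1 r), muV p r b = muMass p r ^ k := by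
  simp only [muV]
  rw [← prod_univ_sum, prod_const, card_univ, Fintype.card_fin, muMass]

def igusaCore (p T : ℝ) (r : ℕ) : ℝ :=
  ∑ c ∈ Icc 1 r, ∑ x ∈ Icc 1 r, ∑ y ∈ Icc 1 r,
    mu p r c * mu p r x * mu p r y * (T ^ (-(min c (min x y) : ℤ)) - 1)

lemma sum_S12_kernel_eq {T : ℝ} (hT : T ≠ 0) (p : ℝ) (r1 r2 : ℕ) :
    ∑ a15 ∈ Icc 1 (r1 + r2), ∑ a25 ∈ Icc 1 r2, ∑ a24 ∈ Icc 1 r2,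
      mu p (r1 + r2) a15 * mu p r2 a25 * mu p r2 a24 *
        (T ^ (-(min r1 a15 + min (r1 + r2) (min a15 (min (a25 + r1) (a24 + r1))) : ℤ)) -
          T ^ (-(2 * min r1 a15 : ℤ)))
      = T ^ (-(2 * r1 : ℤ)) * igusaCore p T r2 := by
  rw [sum_Icc_one_add, sum_eq_zero, zero_add, igusaCore, mul_sum]
  · refine sum_congr rfl fun c hc => ?_
    rw [mul_sum]
    refine sum_congr rfl fun x hx => ?_
    rw [mul_sum]
    refine sum_congr rfl fun y hy => ?_
    simp only [mem_Icc] at hc hx hy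
    have hmin : min (r1 + r2) (min (r1 + c) (min (x + r1) (y + r1))) = r1 + min c (min x y) := by
      omega
    have hexp : -((min r1 (r1 + c) : ℕ) + (r1 + min c (min x y) : ℕ) : ℤ) =
        -(2 * r1 : ℤ) + -(min c (min x y) : ℤ) := by
      push_cast; omega
    rw [mu_add_add, hmin, hexp, min_eq_left (Nat.le_add_right r1 c), zpow_add₀ hT]
    ring
  · intro a ha
    refine sum_eq_zero fun x hx => sum_eq_zero fun y hy => ?_
    simp only [mem_Icc] at ha hx hy
    rw [sub_eq_zero.mpr, mul_zero]
    congr 1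
    omega

lemma S12term_eq {T : ℝ} (hT : T ≠ 0) (p : ℝ) (r1 r2 : ℕ) :
    S12term p T r1 r2 = p ^ (8 * r2 + 4 * r1) * T ^ (6 * r2 + 5 * r1) *
      (T ^ (-(2 * r1 : ℤ)) * igusaCore p T r2 *
        (muMass p (r1 + r2) ^ 3 * muMass p r1 * muMass p r2 ^ 2)) := by
  have hsplit : ∀ a15 a14 a13 a12 a11 a25 a24 a23 a22 : ℕ,
      mu p (r1 + r2) a15 * mu p (r1 + r2) a14 * mu p (r1 + r2) a13 * mu p (r1 + r2) a12 *
          mu p r1 a11 * mu p r2 a25 * mu p r2 a24 * mu p r2 a23 * mu p r2 a22 *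
          (T ^ (-(min r1 a15 + min (r1 + r2) (min a15 (min (a25 + r1) (a24 + r1))) : ℤ)) -
            T ^ (-(2 * min r1 a15 : ℤ)))
        = mu p (r1 + r2) a15 * mu p r2 a25 * mu p r2 a24 *
          (T ^ (-(min r1 a15 + min (r1 + r2) (min a15 (min (a25 + r1) (a24 + r1))) : ℤ)) -
            T ^ (-(2 * min r1 a15 : ℤ))) *
          (mu p (r1 + r2) a14 * (mu p (r1 + r2) a13 * (mu p (r1 + r2) a12 *
            (mu p r1 a11 * (mu p r2 a23 * mu p r2 a22))))) := by
    intros; ring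
  simp only [S12term, hsplit, ← mul_sum, ← sum_mul, sum_S12_kernel_eq hT]
  simp only [muMass]
  ring

lemma S2term_eq (p T : ℝ) (r : ℕ) :
    S2term p T r = p ^ (8 * r) * T ^ (6 * r) * (igusaCore p T r * muMass p r ^ 5) := by
  have hmin : ∀ b ∈ Fintype.piFinset (fun _ : Fin 8 => Icc 1 r),
      (min r (min (b 0) (min (b 1) (b 2))) : ℤ) =
        min (b 0 : ℤ) (min (b 1 : ℤ) (b 2 : ℤ)) := by
    intro b hb
    have := Fintype.mem_piFinset.mp hb 0
    simp only [mem_Icc] at this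
    omega
  have hsplit : ∀ (x y z : ℕ) (b : Fin 5 → ℕ),
      mu p r x * (mu p r y * (mu p r z * muV p r b)) * (T ^ (-(min x (min y z) : ℤ)) - 1) =
        mu p r x * mu p r y * mu p r z * (T ^ (-(min x (min y z) : ℤ)) - 1) * muV p r b := by
    intros; ring
  have hcons : ∀ (x y z : ℕ) (b : Fin 5 → ℕ),
      (Fin.cons x (Fin.cons y (Fin.cons z b)) : Fin 8 → ℕ) 2 = z :=
    fun _ _ _ _ => rfl
  rw [S2term, sum_congr rfl fun b hb => by rw [hmin b hb]]
  simp only [sum_piFinset_const_succ (n := 7), sum_piFinset_const_succ (n := 6),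
    sum_piFinset_const_succ (n := 5), muV_cons, Fin.cons_zero, Fin.cons_one, hcons, hsplit,
    ← mul_sum, ← sum_mul, sum_muV, igusaCore]

lemma S12term_succ_succ {p T : ℝ} (hp : p ≠ 0) (hT : T ≠ 0) (s1 s2 : ℕ) :
    S12term p T (s1 + 1) (s2 + 1) =
      S2term p T (s2 + 1) * (p⁻¹ * (p ^ 8 * T ^ 3) ^ (s1 + 1)) := by
  rw [S12term_eq hT, S2term_eq, show s1 + 1 + (s2 + 1) = s1 + s2 + 1 + 1 by ring,
    muMass_succ hp, muMass_succ hp, muMass_succ hp, zpow_neg, zpow_mul, zpow_natCast]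
  field_simp
  ring

lemma abs_S2term_le {p T : ℝ} (hp : 1 ≤ p) (hT0 : 0 < T) (hT1 : T ≤ 1) (m : ℕ) :
    |S2term p T (m + 1)| ≤ (p ^ 16 * T ^ 5) ^ (m + 1) := by
  set r := m + 1
  have hsum : |∑ b ∈ Fintype.piFinset (fun _ : Fin 8 => Icc 1 r),
      muV p r b * (T ^ (-(min r (min (b 0) (min (b 1) (b 2))) : ℤ)) - 1)|
        ≤ (p ^ m) ^ 8 * T⁻¹ ^ r := by
    rw [← muMass_succ (p := p) (by positivity) m, ← sum_muV, sum_mul]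
    refine (abs_sum_le_sum_abs _ _).trans (sum_le_sum fun b _ => ?_)
    have hμ : 0 ≤ muV p r b := prod_nonneg fun j _ => mu_nonneg hp _ _
    rw [abs_mul, abs_of_nonneg hμ]
    exact mul_le_mul_of_nonneg_left (abs_zpow_neg_sub_one_le hT0 hT1 (by positivity)
      (min_le_left _ _)) hμ
  have hpm : p ^ m ≤ p ^ r := pow_le_pow_right₀ hp (Nat.le_succ m)
  have hT : T ≠ 0 := hT0.ne'
  calc |S2term p T r| ≤ p ^ (8 * r) * T ^ (6 * r) * ((p ^ m) ^ 8 * T⁻¹ ^ r) := by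
        rw [S2term, abs_mul, abs_of_nonneg (by positivity)]
        gcongr
    _ ≤ p ^ (8 * r) * T ^ (6 * r) * ((p ^ r) ^ 8 * T⁻¹ ^ r) := by gcongr
    _ = (p ^ 16 * T ^ 5) ^ r := by
        rw [inv_pow]
        field_simp
        ring

/-- Extraction of the lower Igusa factor: for `p ≥ 2` and `0 < T ≤ p^{-9}` both series
converge absolutely and `A_{1*,2*} − A_{1*,2} = p^{-1} · Y₁/(1−Y₁) · (A_{2*} − A_2)`
with `Y₁ = p^8 T^3`. -/
theorem lower_igusa_extraction (p T : ℝ) (hp : 2 ≤ p) (hT0 : 0 < T)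
    (hT : T ≤ ((p : ℝ) ^ (9 : ℕ))⁻¹) :
    Summable (fun rr : ℕ × ℕ => |S12term p T (rr.2 + 1) (rr.1 + 1)|) ∧
    Summable (fun r : ℕ => |S2term p T (r + 1)|) ∧
    (∑' rr : ℕ × ℕ, S12term p T (rr.2 + 1) (rr.1 + 1)) =
      p⁻¹ * (p ^ 8 * T ^ 3 / (1 - p ^ 8 * T ^ 3)) * ∑' r : ℕ, S2term p T (r + 1) := by
  have hp1 : 1 < p := by linarith
  have hpT : p ^ 9 * T ≤ 1 := by
    simpa only [mul_inv_cancel₀ (by positivity : p ^ 9 ≠ 0)] using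
      mul_le_mul_of_nonneg_left hT (by positivity : 0 ≤ p ^ 9)
  have hT1 : T ≤ 1 := by
    simpa using (pow_mul_pow_lt_one hp1 hT0 hpT (a := 0) (b := 1) (by omega)).le
  have hY := pow_mul_pow_lt_one hp1 hT0 hpT (a := 8) (b := 3) (by omega)
  have hK := pow_mul_pow_lt_one hp1 hT0 hpT (a := 16) (b := 5) (by omega)
  have hS2 : Summable fun r : ℕ => |S2term p T (r + 1)| :=
    .of_nonneg_of_le (fun _ => abs_nonneg _) (abs_S2term_le hp1.le hT0 hT1)
      (hasSum_pow_succ (by positivity) hK).summable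
  have hgeom := (hasSum_pow_succ (by positivity) hY).mul_left p⁻¹
  have hterm : ∀ rr : ℕ × ℕ, S12term p T (rr.2 + 1) (rr.1 + 1) =
      S2term p T (rr.1 + 1) * (p⁻¹ * (p ^ 8 * T ^ 3) ^ (rr.2 + 1)) :=
    fun rr => S12term_succ_succ (by positivity) hT0.ne' _ _
  have hS12 : Summable fun rr : ℕ × ℕ => |S12term p T (rr.2 + 1) (rr.1 + 1)| := by
    simpa only [hterm, abs_mul] using
      hS2.mul_of_nonneg hgeom.summable.abs (fun _ => abs_nonneg _) (fun _ => abs_nonneg _)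
  refine ⟨hS12, hS2, ?_⟩
  rw [tsum_congr hterm, ← hS2.of_abs.tsum_mul_tsum hgeom.summable
    (by simpa only [hterm] using hS12.of_abs), hgeom.tsum_eq, mul_comm]
end
end

section
/- For every integer m ≥ 1, every real p > 0 with p ≠ 1, and all real U_1, …, U_m with U_i ∉ {0, 1} for each i: I_m(p^{−1}; U_1^{−1}, …, U_m^{−1}) = (−1)^m · p^{binom(m+1,2)} · I_m(p; U_1, …, U_m), where binom(m+1,2) = m(m+1)/2. In other words, inverting p and all the variables U_i multiplies the Igusa factor I_m by (−1)^m p^{m(m+1)/2}. -/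
open Finset

noncomputable section

/-- Gaussian binomial coefficient `binom(M,k)_q = ∏_{j=1}^k (q^{M-k+j}-1)/(q^j-1)`. -/
def gb (q : ℝ) (M k : ℕ) : ℝ :=
  ∏ j ∈ range k, (q ^ (M - k + (j + 1)) - 1) / (q ^ (j + 1) - 1)

/-- Auxiliary recursion for the number of flags of codimension type `I`. -/
def bAux (q : ℝ) (m : ℕ) : ℕ → List ℕ → ℝ
  | _, [] => 1
  | prev, i :: rest => gb q (m + 1 - prev) (i - prev) * bAux q m i rest

/-- `b^m_I(q)`, the flag-counting polynomial attached to `I ⊆ {1,…,m}`. -/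
def bI (q : ℝ) (m : ℕ) (I : Finset ℕ) : ℝ := bAux q m 0 (I.sort (· ≤ ·))

/-- The Igusa factor `I_m(p; U_1,…,U_m) = Σ_{I⊆{1,…,m}} b^m_I(p⁻¹) ∏_{i∈I} U_i/(1−U_i)`. -/
def igusa (p : ℝ) (m : ℕ) (U : ℕ → ℝ) : ℝ :=
  ∑ I ∈ (Icc 1 m).powerset, bI p⁻¹ m I * ∏ i ∈ I, U i / (1 - U i)

/-!
Put `x_i = U_i / (1 - U_i)`. Inverting `U_i` turns `x_i` into `-(1 + x_i)`, so expanding the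
products writes `I_m(p⁻¹; U⁻¹)` as `∑_J x^J ∑_{I ⊇ J} (-1)^{|I|} b^m_I(p)`, and it suffices to show
that the inner sum is `(-1)^m p^{binom(m+1,2)} b^m_J(p⁻¹)`.

`b^m_I` is a `q`-multinomial coefficient, so it factors when `I` is cut at one of its elements `j`:
`b^m_I = b^{j-1}_{I ∩ [1,j)} · binom(m+1,j)_q · b^{m-j}_{(I ∩ (j,m]) - j}`. Cutting at the largest
element of `J` reduces the inner sum to the case `J = ∅`, which is the `q`-binomial theorem
`∑_k (-1)^k q^{binom(k,2)} binom(n,k)_q = 0` for `n ≥ 1` (a telescoping sum by `q`-Pascal).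
The power of `p` comes from `binom(M,k)_q = q^{k(M-k)} binom(M,k)_{q⁻¹}`.
-/

def qFactorial (q : ℝ) (n : ℕ) : ℝ := ∏ j ∈ range n, (q ^ (j + 1) - 1)

section GaussianBinomial

variable {q : ℝ}

theorem pow_succ_sub_one_ne_zero (hq : 0 ≤ q) (hq1 : q ≠ 1) (n : ℕ) : q ^ (n + 1) - 1 ≠ 0 :=
  sub_ne_zero.mpr fun h => hq1 ((pow_eq_one_iff_of_nonneg hq n.succ_ne_zero).mp h)

theorem qFactorial_succ (n : ℕ) : qFactorial q (n + 1) = qFactorial q n * (q ^ (n + 1) - 1) :=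
  prod_range_succ _ n

theorem qFactorial_ne_zero (hq : 0 ≤ q) (hq1 : q ≠ 1) (n : ℕ) : qFactorial q n ≠ 0 :=
  prod_ne_zero_iff.mpr fun j _ => pow_succ_sub_one_ne_zero hq hq1 j

theorem gb_eq_qFactorial_div (hq : 0 ≤ q) (hq1 : q ≠ 1) {M k : ℕ} (h : k ≤ M) :
    gb q M k = qFactorial q M / (qFactorial q k * qFactorial q (M - k)) := by
  have hsplit : qFactorial q M =
      qFactorial q (M - k) * ∏ j ∈ range k, (q ^ (M - k + (j + 1)) - 1) := by
    conv_lhs => rw [← Nat.sub_add_cancel h]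
    rw [qFactorial, prod_range_add]
    rfl
  rw [gb, prod_div_distrib, hsplit, mul_comm (qFactorial q k),
    mul_div_mul_left _ _ (qFactorial_ne_zero hq hq1 _), qFactorial]

theorem gb_zero (M : ℕ) : gb q M 0 = 1 := prod_range_zero _

theorem gb_self (hq : 0 ≤ q) (hq1 : q ≠ 1) (M : ℕ) : gb q M M = 1 :=
  prod_eq_one fun j _ => by
    rw [Nat.sub_self, zero_add, div_self (pow_succ_sub_one_ne_zero hq hq1 j)]

theorem gb_succ_succ (hq : 0 ≤ q) (hq1 : q ≠ 1) {n k : ℕ} (h : k < n) :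
    gb q (n + 1) (k + 1) = gb q n k + q ^ (k + 1) * gb q n (k + 1) := by
  obtain ⟨d, rfl⟩ : ∃ d, n = k + d + 1 := ⟨n - k - 1, by omega⟩
  rw [gb_eq_qFactorial_div hq hq1 (by omega), gb_eq_qFactorial_div hq hq1 (by omega),
    gb_eq_qFactorial_div hq hq1 (by omega), show k + d + 1 + 1 - (k + 1) = d + 1 by omega,
    show k + d + 1 - k = d + 1 by omega, show k + d + 1 - (k + 1) = d by omega,
    qFactorial_succ (k + d + 1), qFactorial_succ k, qFactorial_succ d,
    show k + d + 1 + 1 = (k + 1) + (d + 1) by omega, pow_add]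
  have := qFactorial_ne_zero hq hq1 k
  have := qFactorial_ne_zero hq hq1 d
  have := pow_succ_sub_one_ne_zero hq hq1 k
  have := pow_succ_sub_one_ne_zero hq hq1 d
  field_simp
  ring

theorem gb_mul_gb (hq : 0 ≤ q) (hq1 : q ≠ 1) {n j c : ℕ} (hcj : c ≤ j) (hjn : j ≤ n) :
    gb q n c * gb q (n - c) (j - c) = gb q n j * gb q j c := by
  rw [gb_eq_qFactorial_div hq hq1 (hcj.trans hjn), gb_eq_qFactorial_div hq hq1 (by omega),
    gb_eq_qFactorial_div hq hq1 hjn, gb_eq_qFactorial_div hq hq1 hcj,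
    show n - c - (j - c) = n - j by omega]
  have := qFactorial_ne_zero hq hq1 c
  have := qFactorial_ne_zero hq hq1 (j - c)
  have := qFactorial_ne_zero hq hq1 (n - j)
  have := qFactorial_ne_zero hq hq1 j
  have := qFactorial_ne_zero hq hq1 (n - c)
  field_simp

theorem gb_eq_pow_mul_gb_inv (hq : 0 < q) (hq1 : q ≠ 1) (M k : ℕ) :
    gb q M k = q ^ (k * (M - k)) * gb q⁻¹ M k := by
  have factor (a b : ℝ) (ha : a ≠ 0) (hb : b ≠ 0) (hb1 : b - 1 ≠ 0) :
      (a * b - 1) / (b - 1) = a * (((a * b)⁻¹ - 1) / (b⁻¹ - 1)) := by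
    have : 1 - b ≠ 0 := fun h => hb1 (by linarith)
    field_simp
    ring
  rw [gb, gb, mul_comm k, pow_mul, ← card_range k, ← prod_const, card_range, ← prod_mul_distrib]
  refine prod_congr rfl fun j _ => ?_
  rw [inv_pow, inv_pow, pow_add q (M - k) (j + 1)]
  exact factor _ _ (pow_ne_zero _ hq.ne') (pow_ne_zero _ hq.ne')
    (pow_succ_sub_one_ne_zero hq.le hq1 j)

end GaussianBinomial

theorem Nat.add_choose_two (a b : ℕ) : (a + b).choose 2 = a.choose 2 + b.choose 2 + a * b := by
  rw [Nat.add_choose_eq]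
  simp [Finset.Nat.antidiagonal_succ]
  ring

theorem sum_range_neg_one_pow_mul_gb {q : ℝ} (hq : 0 ≤ q) (hq1 : q ≠ 1) (m : ℕ) :
    ∑ j ∈ range m, (-1) ^ j * q ^ (j + 1).choose 2 * gb q (m + 1) (j + 1) =
      1 - (-1) ^ m * q ^ (m + 1).choose 2 := by
  set a : ℕ → ℝ := fun j => (-1) ^ j * q ^ (j + 1).choose 2 * gb q m j
  have telescope : ∀ j ∈ range m,
      (-1) ^ j * q ^ (j + 1).choose 2 * gb q (m + 1) (j + 1) = a j - a (j + 1) := by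
    intro j hj
    simp only [a]
    rw [gb_succ_succ hq hq1 (mem_range.mp hj), Nat.choose_succ_succ (j + 1) 1,
      Nat.choose_one_right]
    ring
  rw [sum_congr rfl telescope, sum_range_sub']
  simp [a, gb_zero, gb_self hq hq1]

theorem Finset.sort_union_of_forall_lt {α : Type*} [LinearOrder α] {s t : Finset α}
    (h : ∀ a ∈ s, ∀ b ∈ t, a < b) :
    (s ∪ t).sort (· ≤ ·) = s.sort (· ≤ ·) ++ t.sort (· ≤ ·) := by
  have hlt : (s.sort (· ≤ ·) ++ t.sort (· ≤ ·)).Pairwise (· < ·) :=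
    List.pairwise_append.mpr ⟨(s.sortedLT_sort).pairwise, (t.sortedLT_sort).pairwise,
      fun a ha b hb => h a ((mem_sort _).mp ha) b ((mem_sort _).mp hb)⟩
  have key := (List.toFinset_sort (· ≤ ·) hlt.nodup).mpr (hlt.imp le_of_lt)
  rwa [List.toFinset_append, sort_toFinset, sort_toFinset] at key

theorem bAux_map_add (q : ℝ) (m c : ℕ) (L : List ℕ) (i : ℕ) :
    bAux q (m + c) (i + c) (L.map (· + c)) = bAux q m i L := by
  induction L generalizing i with
  | nil => rfl
  | cons a L ih =>
    rw [List.map_cons, bAux, bAux, ih, show m + c + 1 - (i + c) = m + 1 - i by omega,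
      Nat.add_sub_add_right]

theorem bAux_append_cons {q : ℝ} (hq : 0 ≤ q) (hq1 : q ≠ 1) {m j : ℕ} (hj : j ≤ m + 1)
    (L₁ L₂ : List ℕ) (prev : ℕ) (hsorted : L₁.Pairwise (· ≤ ·))
    (hbound : ∀ a ∈ L₁, prev ≤ a ∧ a < j) :
    bAux q m prev (L₁ ++ j :: L₂) =
      bAux q (j - 1) prev L₁ * gb q (m + 1 - prev) (j - prev) * bAux q m j L₂ := by
  induction L₁ generalizing prev with
  | nil => simp [bAux]
  | cons a L₁ ih =>
    obtain ⟨hprev, haj⟩ := hbound a List.mem_cons_self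
    rw [List.pairwise_cons] at hsorted
    have hchain := gb_mul_gb hq hq1 (n := m + 1 - prev) (c := a - prev) (j := j - prev)
      (by omega) (by omega)
    rw [show m + 1 - prev - (a - prev) = m + 1 - a by omega,
      show j - prev - (a - prev) = j - a by omega] at hchain
    rw [List.cons_append, bAux, bAux, ih a hsorted.2
      fun b hb => ⟨hsorted.1 b hb, (hbound b (List.mem_cons_of_mem a hb)).2⟩,
      show j - 1 + 1 - prev = j - prev by omega]
    linear_combination bAux q (j - 1) a L₁ * bAux q m j L₂ * hchain

theorem bI_empty (q : ℝ) (m : ℕ) : bI q m ∅ = 1 := by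
  rw [bI, sort_empty, bAux]

theorem bI_union_insert_map_addRight {q : ℝ} (hq : 0 ≤ q) (hq1 : q ≠ 1) {m j : ℕ} (hj : j ≤ m)
    {S T : Finset ℕ} (hS : ∀ x ∈ S, x < j) (hT : ∀ x ∈ T, 0 < x) :
    bI q m (S ∪ insert j (T.map (addRightEmbedding j))) =
      bI q (j - 1) S * gb q (m + 1) j * bI q (m - j) T := by
  have hT' : ∀ x ∈ T.map (addRightEmbedding j), j < x := by
    simp only [mem_map, addRightEmbedding_apply]
    rintro _ ⟨x, hx, rfl⟩
    linarith [hT x hx]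
  have hmap : (T.map (addRightEmbedding j)).sort (· ≤ ·) = (T.sort (· ≤ ·)).map (· + j) :=
    ((StrictMono.strictMonoOn (fun _ _ h => Nat.add_lt_add_right h j) _).map_finsetSort
      (f := addRightEmbedding j)).symm
  have hshift :
      bAux q m j ((T.sort (· ≤ ·)).map (· + j)) = bAux q (m - j) 0 (T.sort (· ≤ ·)) := by
    simpa [Nat.sub_add_cancel hj] using bAux_map_add q (m - j) j (T.sort (· ≤ ·)) 0
  have hST : ∀ a ∈ S, ∀ b ∈ insert j (T.map (addRightEmbedding j)), a < b := by
    intro a ha b hb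
    rcases mem_insert.mp hb with rfl | hb
    · exact hS a ha
    · exact (hS a ha).trans (hT' b hb)
  rw [bI, sort_union_of_forall_lt hST,
    sort_insert _ (fun x hx => (hT' x hx).le) (fun hjT => lt_irrefl j (hT' j hjT)),
    bAux_append_cons hq hq1 (by omega) _ _ _ (pairwise_sort _ _)
      fun a ha => ⟨Nat.zero_le a, hS a ((mem_sort _).mp ha)⟩,
    hmap, Nat.sub_zero, Nat.sub_zero, hshift]
  rfl

theorem bI_insert_of_forall_lt {q : ℝ} (hq : 0 ≤ q) (hq1 : q ≠ 1) {m j : ℕ} (hj : j ≤ m)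
    {S : Finset ℕ} (hS : ∀ x ∈ S, x < j) :
    bI q m (insert j S) = bI q (j - 1) S * gb q (m + 1) j := by
  have h := bI_union_insert_map_addRight hq hq1 hj hS (T := ∅) (by simp)
  rwa [map_empty, insert_empty, union_comm, ← insert_eq, bI_empty, mul_one] at h

theorem sum_powerset_Icc_one_eq_add_sum_insert {M : Type*} [AddCommMonoid M] (f : Finset ℕ → M)
    (m : ℕ) : ∑ I ∈ (Icc 1 m).powerset, f I =
      f ∅ + ∑ j ∈ range m, ∑ S ∈ (Icc 1 j).powerset, f (insert (j + 1) S) := by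
  induction m with
  | zero => simp
  | succ m ih =>
    have hIcc : Icc 1 (m + 1) = insert (m + 1) (Icc 1 m) := by
      ext x; simp only [mem_Icc, mem_insert]; omega
    rw [hIcc, sum_powerset_insert (by simp), ih, sum_range_succ, add_assoc]

section
variable {j : ℕ} {S T : Finset ℕ}

theorem filter_lt_union_insert_map_addRight (hS : ∀ x ∈ S, x < j) :
    (S ∪ insert j (T.map (addRightEmbedding j))).filter (· < j) = S := by
  ext x
  simp only [mem_filter, mem_union, mem_insert, mem_map, addRightEmbedding_apply]
  constructor
  · rintro ⟨hx | rfl | ⟨y, -, rfl⟩, hxj⟩ <;> first | exact hx | omega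
  · exact fun hx => ⟨Or.inl hx, hS x hx⟩

theorem image_sub_filter_gt_union_insert_map_addRight (hS : ∀ x ∈ S, x < j)
    (hT : ∀ x ∈ T, 0 < x) :
    ((S ∪ insert j (T.map (addRightEmbedding j))).filter (j < ·)).image (· - j) = T := by
  ext x
  simp only [mem_image, mem_filter, mem_union, mem_insert, mem_map, addRightEmbedding_apply]
  constructor
  · rintro ⟨y, ⟨hy | rfl | ⟨z, hz, rfl⟩, hjy⟩, rfl⟩
    · exact absurd (hS y hy) (by omega)
    · omega
    · simpa using hz
  · exact fun hx => ⟨x + j, ⟨Or.inr (Or.inr ⟨x, hx, rfl⟩), by linarith [hT x hx]⟩, by omega⟩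

theorem filter_lt_union_insert_map_addRight_image_sub {I : Finset ℕ} (hj : j ∈ I) :
    I.filter (· < j) ∪ insert j (((I.filter (j < ·)).image (· - j)).map (addRightEmbedding j)) =
      I := by
  ext x
  simp only [mem_union, mem_filter, mem_insert, mem_map, mem_image, addRightEmbedding_apply]
  constructor
  · rintro (⟨hx, -⟩ | rfl | ⟨-, ⟨y, ⟨hy, hjy⟩, rfl⟩, rfl⟩)
    · exact hx
    · exact hj
    · rwa [Nat.sub_add_cancel hjy.le]
  · intro hx
    rcases lt_trichotomy x j with hxj | rfl | hxj
    · exact Or.inl ⟨hx, hxj⟩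
    · exact Or.inr (Or.inl rfl)
    · exact Or.inr (Or.inr ⟨x - j, ⟨x, ⟨hx, hxj⟩, rfl⟩, by omega⟩)

end

theorem sum_powerset_Icc_one_superset_insert {M : Type*} [AddCommMonoid M] {m j : ℕ}
    (hj1 : 1 ≤ j) (hj : j ≤ m) {J : Finset ℕ} (hJ : ∀ x ∈ J, x < j) (f : Finset ℕ → M) :
    ∑ I ∈ (Icc 1 m).powerset with insert j J ⊆ I, f I =
      ∑ S ∈ (Icc 1 (j - 1)).powerset with J ⊆ S, ∑ T ∈ (Icc 1 (m - j)).powerset,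
        f (S ∪ insert j (T.map (addRightEmbedding j))) := by
  rw [← sum_product']
  symm
  refine sum_nbij' (fun p => p.1 ∪ insert j (p.2.map (addRightEmbedding j)))
    (fun I => (I.filter (· < j), (I.filter (j < ·)).image (· - j))) ?_ ?_ ?_ ?_ (fun _ _ => rfl)
  · rintro ⟨S, T⟩ h
    simp only [mem_product, mem_filter, mem_powerset, subset_iff, mem_Icc, mem_union, mem_insert,
      mem_map, addRightEmbedding_apply] at h ⊢
    refine ⟨?_, ?_⟩
    · rintro x (hx | rfl | ⟨y, hy, rfl⟩)
      · have := h.1.1 hx; omega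
      · omega
      · have := h.2 hy; omega
    · rintro x (rfl | hx)
      · simp
      · exact Or.inl (h.1.2 hx)
  · intro I h
    simp only [mem_product, mem_filter, mem_powerset, subset_iff, mem_Icc, mem_image, mem_insert,
      forall_eq_or_imp] at h ⊢
    refine ⟨⟨fun x hx => ?_, fun x hx => ⟨h.2.2 x hx, hJ x hx⟩⟩, ?_⟩
    · have := h.1 hx.1; omega
    · rintro _ ⟨x, hx, rfl⟩
      have := h.1 hx.1; omega
  · rintro ⟨S, T⟩ h
    simp only [mem_product, mem_filter, mem_powerset, subset_iff, mem_Icc] at h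
    have hS : ∀ x ∈ S, x < j := fun x hx => by have := h.1.1 hx; omega
    rw [filter_lt_union_insert_map_addRight hS,
      image_sub_filter_gt_union_insert_map_addRight hS fun x hx => (h.2 hx).1]
  · intro I h
    exact filter_lt_union_insert_map_addRight_image_sub
      ((mem_filter.mp h).2 (mem_insert_self j J))

def supersetSignedSum (q : ℝ) (m : ℕ) (J : Finset ℕ) : ℝ :=
  ∑ I ∈ (Icc 1 m).powerset with J ⊆ I, (-1) ^ #I * bI q m I

theorem supersetSignedSum_empty_eq_sum (q : ℝ) (m : ℕ) :
    supersetSignedSum q m ∅ = ∑ I ∈ (Icc 1 m).powerset, (-1) ^ #I * bI q m I := by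
  rw [supersetSignedSum, filter_true_of_mem fun _ _ => empty_subset _]

section SupersetSignedSum

variable {q : ℝ}

theorem supersetSignedSum_empty (hq : 0 ≤ q) (hq1 : q ≠ 1) (m : ℕ) :
    supersetSignedSum q m ∅ = (-1) ^ m * q ^ (m + 1).choose 2 := by
  induction m using Nat.strong_induction_on with
  | _ m ih =>
  have hmax : ∀ j ∈ range m, ∑ S ∈ (Icc 1 j).powerset,
      (-1) ^ #(insert (j + 1) S) * bI q m (insert (j + 1) S) =
        -((-1) ^ j * q ^ (j + 1).choose 2 * gb q (m + 1) (j + 1)) := by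
    intro j hj
    have hsplit : ∀ S ∈ (Icc 1 j).powerset,
        (-1) ^ #(insert (j + 1) S) * bI q m (insert (j + 1) S) =
          -gb q (m + 1) (j + 1) * ((-1) ^ #S * bI q j S) := by
      intro S hS
      have hlt : ∀ x ∈ S, x < j + 1 := fun x hx => by
        have := mem_Icc.mp (mem_powerset.mp hS hx); omega
      rw [card_insert_of_notMem fun h => lt_irrefl _ (hlt _ h),
        bI_insert_of_forall_lt (j := j + 1) hq hq1 (mem_range.mp hj) hlt, Nat.add_sub_cancel,
        pow_succ]
      ring
    rw [sum_congr rfl hsplit, ← mul_sum, ← supersetSignedSum_empty_eq_sum,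
      ih j (mem_range.mp hj)]
    ring
  rw [supersetSignedSum_empty_eq_sum, sum_powerset_Icc_one_eq_add_sum_insert, sum_congr rfl hmax,
    sum_neg_distrib, sum_range_neg_one_pow_mul_gb hq hq1, card_empty, pow_zero, bI_empty]
  ring

theorem supersetSignedSum_insert (hq : 0 ≤ q) (hq1 : q ≠ 1) {m j : ℕ} (hj1 : 1 ≤ j)
    (hj : j ≤ m) {J : Finset ℕ} (hJ : ∀ x ∈ J, x < j) :
    supersetSignedSum q m (insert j J) =
      -(supersetSignedSum q (j - 1) J * gb q (m + 1) j * supersetSignedSum q (m - j) ∅) := by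
  rw [supersetSignedSum, sum_powerset_Icc_one_superset_insert hj1 hj hJ, supersetSignedSum,
    supersetSignedSum_empty_eq_sum, sum_mul, sum_mul, ← sum_neg_distrib]
  refine sum_congr rfl fun S hS => ?_
  rw [mul_sum, ← sum_neg_distrib]
  refine sum_congr rfl fun T hT => ?_
  have hS : ∀ x ∈ S, x < j := fun x hx => by
    have := mem_Icc.mp (mem_powerset.mp (mem_filter.mp hS).1 hx); omega
  have hT : ∀ x ∈ T, 0 < x := fun x hx => (mem_Icc.mp (mem_powerset.mp hT hx)).1
  have hjT : j ∉ T.map (addRightEmbedding j) := by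
    simp only [mem_map, addRightEmbedding_apply, not_exists, not_and]
    exact fun x hx => by linarith [hT x hx]
  have hdisj : Disjoint S (insert j (T.map (addRightEmbedding j))) := by
    refine disjoint_left.mpr fun x hx hx' => ?_
    simp only [mem_insert, mem_map, addRightEmbedding_apply] at hx'
    rcases hx' with rfl | ⟨y, -, rfl⟩ <;> linarith [hS _ hx]
  rw [bI_union_insert_map_addRight hq hq1 hj hS hT, card_union_of_disjoint hdisj,
    card_insert_of_notMem hjT, card_map, pow_add, pow_succ]
  ring

theorem supersetSignedSum_eq (hq : 0 < q) (hq1 : q ≠ 1) {m : ℕ} {J : Finset ℕ}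
    (hJ : J ⊆ Icc 1 m) :
    supersetSignedSum q m J = (-1) ^ m * q ^ (m + 1).choose 2 * bI q⁻¹ m J := by
  induction J using Finset.induction_on_max generalizing m with
  | empty => rw [supersetSignedSum_empty hq.le hq1, bI_empty, mul_one]
  | insert j J hlt ih =>
    obtain ⟨hj1, hjm⟩ := mem_Icc.mp (hJ (mem_insert_self j J))
    have hJ' : J ⊆ Icc 1 (j - 1) := fun x hx => by
      have := mem_Icc.mp (hJ (mem_insert_of_mem hx))
      have := hlt x hx
      exact mem_Icc.mpr ⟨by omega, by omega⟩
    obtain ⟨a, rfl⟩ : ∃ a, j = a + 1 := ⟨j - 1, by omega⟩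
    obtain ⟨d, rfl⟩ : ∃ d, m = a + 1 + d := ⟨m - (a + 1), by omega⟩
    have hexp : q ^ (a + 1 + d + 1).choose 2 = q ^ (a + 1).choose 2 * q ^ (d + 1).choose 2 *
        q ^ ((a + 1) * (a + 1 + d + 1 - (a + 1))) := by
      rw [show a + 1 + d + 1 = (a + 1) + (d + 1) by omega, Nat.add_choose_two, pow_add, pow_add,
        Nat.add_sub_cancel_left]
    rw [supersetSignedSum_insert hq.le hq1 hj1 hjm hlt, ih hJ', supersetSignedSum_empty hq.le hq1,
      bI_insert_of_forall_lt (inv_nonneg.mpr hq.le) (inv_ne_one.mpr hq1) hjm hlt,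
      gb_eq_pow_mul_gb_inv hq hq1, hexp, Nat.add_sub_cancel, Nat.add_sub_cancel_left]
    ring

end SupersetSignedSum

theorem Finset.sum_powerset_mul_prod_one_add {ι R : Type*} [DecidableEq ι] [CommSemiring R]
    (s : Finset ι) (a : Finset ι → R) (x : ι → R) :
    ∑ I ∈ s.powerset, a I * ∏ i ∈ I, (1 + x i) =
      ∑ J ∈ s.powerset, (∑ I ∈ s.powerset with J ⊆ I, a I) * ∏ j ∈ J, x j := by
  simp_rw [prod_one_add, mul_sum, sum_mul]
  refine sum_comm' fun I J => ?_
  simp only [mem_powerset, mem_filter]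
  exact ⟨fun h => ⟨⟨h.1, h.2⟩, h.2.trans h.1⟩, fun h => ⟨h.1.1, h.1.2⟩⟩

theorem inv_div_one_sub_inv {u : ℝ} (hu0 : u ≠ 0) (hu1 : u ≠ 1) :
    u⁻¹ / (1 - u⁻¹) = -(1 + u / (1 - u)) := by
  have : 1 - u ≠ 0 := sub_ne_zero.mpr (Ne.symm hu1)
  have : u - 1 ≠ 0 := sub_ne_zero.mpr hu1
  field_simp
  ring

theorem igusa_factor_inversion_general (m : ℕ) (p : ℝ) (hp : 0 < p) (hp1 : p ≠ 1)
    (U : ℕ → ℝ) (hU0 : ∀ i, 1 ≤ i → i ≤ m → U i ≠ 0) (hU1 : ∀ i, 1 ≤ i → i ≤ m → U i ≠ 1) :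
    igusa p⁻¹ m (fun i => (U i)⁻¹) = (-1) ^ m * p ^ (m * (m + 1) / 2) * igusa p m U := by
  have hU : ∀ I ∈ (Icc 1 m).powerset, bI p m I * ∏ i ∈ I, (U i)⁻¹ / (1 - (U i)⁻¹) =
      (-1) ^ #I * bI p m I * ∏ i ∈ I, (1 + U i / (1 - U i)) := by
    intro I hI
    have hinv : ∀ i ∈ I, (U i)⁻¹ / (1 - (U i)⁻¹) = -(1 + U i / (1 - U i)) := fun i hi => by
      obtain ⟨h1, hm⟩ := mem_Icc.mp (mem_powerset.mp hI hi)
      exact inv_div_one_sub_inv (hU0 i h1 hm) (hU1 i h1 hm)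
    rw [prod_congr rfl hinv, prod_neg]
    ring
  have hexp : m * (m + 1) / 2 = (m + 1).choose 2 := by
    rw [Nat.choose_two_right, Nat.add_sub_cancel, mul_comm]
  rw [igusa, igusa, inv_inv, sum_congr rfl hU, sum_powerset_mul_prod_one_add, mul_sum, hexp]
  refine sum_congr rfl fun J hJ => ?_
  rw [← supersetSignedSum, supersetSignedSum_eq hp hp1 (mem_powerset.mp hJ)]
  ring

/-- Inversion symmetry of the Igusa factor: inverting `p` and all the variables `U_i`
multiplies `I_m` by `(−1)^m p^{m(m+1)/2}`. -/
theorem igusa_factor_inversion (m : ℕ) (hm : 1 ≤ m) (p : ℝ) (hp : 0 < p) (hp1 : p ≠ 1)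
    (U : ℕ → ℝ) (hU0 : ∀ i, 1 ≤ i → i ≤ m → U i ≠ 0) (hU1 : ∀ i, 1 ≤ i → i ≤ m → U i ≠ 1) :
    igusa p⁻¹ m (fun i => (U i)⁻¹) = (-1) ^ m * p ^ (m * (m + 1) / 2) * igusa p m U :=
  igusa_factor_inversion_general m p hp hp1 U hU0 hU1
end
end
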